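/- arXiv:0712.0552 — 4 statements merged into one kernel-verified Lean document; each statement's English description precedes it below -/
import Mathlib

section
/- Let T ⊆ ℝⁿ be a closed brick and A ⊆ T. If the characteristic function χ_A : T → ℝ is K-integrable, then A is Jordan measurable. -/
open Set Filter MeasureTheory Topology

/-- A brick in ℝⁿ: a product of `n` bounded intervals. -/
def IsBrick {n : ℕ} (S : Set (Fin n → ℝ)) : Prop :=
  ∃ I : Fin n → Set ℝ,
    (∀ k, (I k).OrdConnected ∧ Bornology.IsBounded (I k)) ∧ S = Set.univ.pi I

/-- The volume of a brick: the product of the lengths of its sides. -/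
noncomputable def brickVol {n : ℕ} (S : Set (Fin n → ℝ)) : ℝ :=
  ∏ k : Fin n, (sSup ((fun x => x k) '' S) - sInf ((fun x => x k) '' S))

/-- A representation of a step function on `T`: a finite linear combination of
characteristic functions of bricks contained in `T`. -/
structure StepRepr {n : ℕ} (T : Set (Fin n → ℝ)) where
  M : ℕ
  c : Fin M → ℝ
  B : Fin M → Set (Fin n → ℝ)
  isBrick : ∀ j, IsBrick (B j)
  subset : ∀ j, B j ⊆ T

/-- The step function determined by a representation. -/
noncomputable def StepRepr.fn {n : ℕ} {T : Set (Fin n → ℝ)} (g : StepRepr T) :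
    (Fin n → ℝ) → ℝ :=
  fun x => ∑ j, g.c j * (g.B j).indicator (fun _ => (1 : ℝ)) x

/-- The integral of a step function. -/
noncomputable def StepRepr.integral {n : ℕ} {T : Set (Fin n → ℝ)} (g : StepRepr T) : ℝ :=
  ∑ j, g.c j * brickVol (g.B j)

/-- The sequence `F` converges nearly uniformly to `f` on `T`: it is uniformly bounded
on `T`, and for every `δ > 0` there are finitely many bricks (contained in `T`) of total
volume `< δ` such that `F` converges uniformly to `f` on the complement of their union. -/
def NearlyUniformlyTo {n : ℕ} (T : Set (Fin n → ℝ)) (F : ℕ → (Fin n → ℝ) → ℝ)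
    (f : (Fin n → ℝ) → ℝ) : Prop :=
  (∃ C : ℝ, ∀ m, ∀ x ∈ T, |F m x| ≤ C) ∧
  ∀ δ > (0 : ℝ), ∃ (M : ℕ) (B : Fin M → Set (Fin n → ℝ)),
    (∀ j, IsBrick (B j) ∧ B j ⊆ T) ∧ (∑ j, brickVol (B j)) < δ ∧
    TendstoUniformlyOn F f atTop (T \ ⋃ j, B j)

/-- `f` is K-integrable on `T`: some sequence of step functions converges nearly
uniformly to `f`. -/
def KIntegrable {n : ℕ} (T : Set (Fin n → ℝ)) (f : (Fin n → ℝ) → ℝ) : Prop :=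
  ∃ g : ℕ → StepRepr T, NearlyUniformlyTo T (fun m => (g m).fn) f

/-- `f` is K-integrable on `T` with K-integral `I`: some sequence of step functions
converges nearly uniformly to `f` and their integrals tend to `I`. -/
def HasKIntegral {n : ℕ} (T : Set (Fin n → ℝ)) (f : (Fin n → ℝ) → ℝ) (I : ℝ) : Prop :=
  ∃ g : ℕ → StepRepr T, NearlyUniformlyTo T (fun m => (g m).fn) f ∧
    Filter.Tendsto (fun m => (g m).integral) Filter.atTop (nhds I)

/-- A Jordan null set: for each `ε > 0` it can be covered by finitely many bricks of
total volume less than `ε`. -/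
def JordanNull {n : ℕ} (A : Set (Fin n → ℝ)) : Prop :=
  ∀ ε > (0 : ℝ), ∃ (M : ℕ) (B : Fin M → Set (Fin n → ℝ)),
    (∀ j, IsBrick (B j)) ∧ A ⊆ (⋃ j, B j) ∧ (∑ j, brickVol (B j)) < ε

section Aux
variable {n : ℕ}

variable {n : ℕ}

/-- The smallest closed brick containing `S`. -/
noncomputable def brickHull (S : Set (Fin n → ℝ)) : Set (Fin n → ℝ) :=
  Set.univ.pi fun k => Set.Icc (sInf ((fun x => x k) '' S)) (sSup ((fun x => x k) '' S))

lemma isBrick_brickHull (S : Set (Fin n → ℝ)) : IsBrick (brickHull S) :=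
  ⟨_, fun _ => ⟨ordConnected_Icc, Metric.isBounded_Icc _ _⟩, rfl⟩

lemma isClosed_brickHull (S : Set (Fin n → ℝ)) : IsClosed (brickHull S) :=
  isClosed_set_pi fun _ _ => isClosed_Icc

lemma image_bdd_of_isBrick {S : Set (Fin n → ℝ)} (h : IsBrick S) (k : Fin n) :
    BddAbove ((fun x => x k) '' S) ∧ BddBelow ((fun x => x k) '' S) := by
  obtain ⟨I, hI, rfl⟩ := h
  have hsub : (fun x => x k) '' (Set.univ.pi I) ⊆ I k := by
    rintro y ⟨x, hx, rfl⟩; exact hx k (mem_univ k)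
  exact ⟨((hI k).2.bddAbove).mono hsub, ((hI k).2.bddBelow).mono hsub⟩

lemma subset_brickHull {S : Set (Fin n → ℝ)} (h : IsBrick S) : S ⊆ brickHull S := by
  intro x hx k _
  exact ⟨csInf_le (image_bdd_of_isBrick h k).2 ⟨x, hx, rfl⟩,
    le_csSup (image_bdd_of_isBrick h k).1 ⟨x, hx, rfl⟩⟩

lemma brickVol_brickHull {S : Set (Fin n → ℝ)} (h : IsBrick S) :
    brickVol (brickHull S) = brickVol S := by
  unfold brickVol
  refine Finset.prod_congr rfl fun k _ => ?_
  rcases S.eq_empty_or_nonempty with rfl | hS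
  · have : brickHull (∅ : Set (Fin n → ℝ)) = Set.univ.pi fun _ : Fin n => Icc (0:ℝ) 0 := by
      unfold brickHull
      simp [Real.sSup_empty, Real.sInf_empty]
    rw [this, eval_image_pi (mem_univ k) ⟨fun _ => 0, fun j _ => by simp⟩]
    simp [csSup_Icc (le_refl (0:ℝ)), csInf_Icc (le_refl (0:ℝ))]
  · have hne : ∀ j : Fin n, ((fun x => x j) '' S).Nonempty := fun j => hS.image _
    have hle : ∀ j : Fin n, sInf ((fun x => x j) '' S) ≤ sSup ((fun x => x j) '' S) :=
      fun j => csInf_le_csSup (hne j) (image_bdd_of_isBrick h j).2 (image_bdd_of_isBrick h j).1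
    have hhne : (brickHull S).Nonempty := hS.mono (subset_brickHull h)
    rw [show brickHull S = Set.univ.pi fun j =>
        Icc (sInf ((fun x => x j) '' S)) (sSup ((fun x => x j) '' S)) from rfl] at hhne ⊢
    rw [eval_image_pi (mem_univ k) hhne, csSup_Icc (hle k), csInf_Icc (hle k)]

lemma brickVol_eq_zero_of_flat {k : Fin n} {c : ℝ} {S : Set (Fin n → ℝ)}
    (h : ∀ x ∈ S, x k = c) : brickVol S = 0 := by
  unfold brickVol
  apply Finset.prod_eq_zero (Finset.mem_univ k)
  rcases S.eq_empty_or_nonempty with rfl | hS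
  · simp [Real.sSup_empty, Real.sInf_empty]
  · have : (fun x => x k) '' S = {c} := by
      apply Subset.antisymm
      · rintro y ⟨x, hx, rfl⟩; exact h x hx
      · rintro y rfl; obtain ⟨x, hx⟩ := hS; exact ⟨x, hx, h x hx⟩
    rw [this, csSup_singleton, csInf_singleton, sub_self]

/-- A finite brick cover with total volume `< ε`. -/
def Precover (s : Set (Fin n → ℝ)) (ε : ℝ) : Prop :=
  ∃ (M : ℕ) (B : Fin M → Set (Fin n → ℝ)),
    (∀ j, IsBrick (B j)) ∧ s ⊆ (⋃ j, B j) ∧ (∑ j, brickVol (B j)) < ε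

lemma precover_of_fintype {ι : Type} [Fintype ι] {s : Set (Fin n → ℝ)} {ε : ℝ}
    (B : ι → Set (Fin n → ℝ)) (hB : ∀ i, IsBrick (B i)) (hs : s ⊆ ⋃ i, B i)
    (hv : ∑ i, brickVol (B i) < ε) : Precover s ε := by
  refine ⟨Fintype.card ι, fun j => B ((Fintype.equivFin ι).symm j), fun j => hB _, ?_, ?_⟩
  · refine hs.trans ?_
    intro x hx
    simp only [mem_iUnion] at hx ⊢
    obtain ⟨i, hi⟩ := hx
    exact ⟨Fintype.equivFin ι i, by simpa using hi⟩
  · rw [Fintype.sum_equiv (Fintype.equivFin ι).symm _ (fun i => brickVol (B i)) (fun j => rfl)]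
    exact hv

lemma Precover.mono {s t : Set (Fin n → ℝ)} {ε : ℝ} (hst : s ⊆ t) (h : Precover t ε) :
    Precover s ε := by
  obtain ⟨M, B, h1, h2, h3⟩ := h
  exact ⟨M, B, h1, hst.trans h2, h3⟩

lemma Precover.union {s t : Set (Fin n → ℝ)} {ε δ : ℝ} (hs : Precover s ε) (ht : Precover t δ) :
    Precover (s ∪ t) (ε + δ) := by
  obtain ⟨M₁, B₁, hb1, hc1, hv1⟩ := hs
  obtain ⟨M₂, B₂, hb2, hc2, hv2⟩ := ht
  refine precover_of_fintype (ι := Fin M₁ ⊕ Fin M₂) (Sum.elim B₁ B₂)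
    (by rintro (i | i) <;> simp [hb1, hb2]) ?_ ?_
  · rw [iUnion_sum]
    exact union_subset_union hc1 hc2
  · rw [Fintype.sum_sum_type]
    exact add_lt_add hv1 hv2


lemma jordanNull_iff_precover {s : Set (Fin n → ℝ)} :
    JordanNull s ↔ ∀ ε > (0:ℝ), Precover s ε := Iff.rfl

lemma precover_empty {ε : ℝ} (hε : 0 < ε) : Precover (∅ : Set (Fin n → ℝ)) ε :=
  ⟨0, Fin.elim0, fun j => j.elim0, by simp, by simpa⟩

lemma JordanNull.union {s t : Set (Fin n → ℝ)} (hs : JordanNull s) (ht : JordanNull t) :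
    JordanNull (s ∪ t) := by
  intro ε hε
  have := Precover.union (hs (ε/2) (by linarith)) (ht (ε/2) (by linarith))
  rwa [add_halves] at this

lemma jordanNull_empty : JordanNull (∅ : Set (Fin n → ℝ)) := fun ε hε => precover_empty hε

lemma JordanNull.mono {s t : Set (Fin n → ℝ)} (hst : s ⊆ t) (ht : JordanNull t) :
    JordanNull s := fun ε hε => Precover.mono hst (ht ε hε)

lemma jordanNull_iUnion : ∀ {m : ℕ} (s : Fin m → Set (Fin n → ℝ)),
    (∀ j, JordanNull (s j)) → JordanNull (⋃ j, s j) := by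
  intro m
  induction m with
  | zero => intro s _; simpa using jordanNull_empty
  | succ m ih =>
    intro s hs
    have : (⋃ j, s j) = s 0 ∪ ⋃ j : Fin m, s j.succ := by
      ext x; simp [mem_iUnion, Fin.exists_fin_succ]
    rw [this]
    exact (hs 0).union (ih _ fun j => hs j.succ)

lemma closure_subset_Icc {s : Set ℝ} (hb : Bornology.IsBounded s) :
    closure s ⊆ Icc (sInf s) (sSup s) := by
  apply closure_minimal _ isClosed_Icc
  exact fun y hy => ⟨csInf_le hb.bddBelow hy, le_csSup hb.bddAbove hy⟩

lemma jordanNull_frontier_of_isBrick {P : Set (Fin n → ℝ)} (h : IsBrick P) :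
    JordanNull (frontier P) := by
  obtain ⟨I, hI, rfl⟩ := h
  rcases (Set.univ.pi I).eq_empty_or_nonempty with he | hne
  · rw [he, frontier_empty]; exact jordanNull_empty
  have hIne : ∀ k, (I k).Nonempty := fun k => by
    obtain ⟨x, hx⟩ := hne; exact ⟨x k, hx k (mem_univ k)⟩
  intro ε hε
  -- faces
  set e : Fin n → Bool → ℝ := fun k b => if b then sSup (I k) else sInf (I k) with he_def
  set face : Fin n × Bool → Set (Fin n → ℝ) := fun p =>
    Set.univ.pi (Function.update (fun j => Icc (sInf (I j)) (sSup (I j))) p.1 {e p.1 p.2})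
    with hface
  refine precover_of_fintype face ?_ ?_ ?_
  · rintro ⟨k, b⟩
    refine ⟨_, fun j => ?_, rfl⟩
    rcases eq_or_ne j k with rfl | hj
    · simp only [Function.update_self]
      exact ⟨ordConnected_singleton, Bornology.isBounded_singleton⟩
    · simp only [Function.update_of_ne hj]
      exact ⟨ordConnected_Icc, Metric.isBounded_Icc _ _⟩
  · intro x hx
    rw [frontier, closure_pi_set, interior_pi_set Set.finite_univ] at hx
    obtain ⟨hxc, hxi⟩ := hx
    simp only [Set.mem_pi, mem_univ, forall_true_left, not_forall] at hxi
    obtain ⟨k, hk⟩ := hxi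
    have hxk : x k ∈ closure (I k) := hxc k (mem_univ k)
    have hbd := closure_subset_Icc (hI k).2 hxk
    have hor : x k = sInf (I k) ∨ x k = sSup (I k) := by
      by_contra hcon
      push_neg at hcon
      have h1 : sInf (I k) < x k := lt_of_le_of_ne hbd.1 (Ne.symm hcon.1)
      have h2 : x k < sSup (I k) := lt_of_le_of_ne hbd.2 hcon.2
      obtain ⟨y, hy, hyx⟩ := exists_lt_of_csInf_lt (hIne k) h1
      obtain ⟨z, hz, hxz⟩ := exists_lt_of_lt_csSup (hIne k) h2
      have : Ioo y z ⊆ I k := (Ioo_subset_Icc_self).trans ((hI k).1.out hy hz)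
      exact hk (interior_maximal this isOpen_Ioo ⟨hyx, hxz⟩)
    have hmem : ∀ (b : Bool), x k = e k b → x ∈ face (k, b) := by
      intro b hb j _
      rcases eq_or_ne j k with rfl | hj
      · simp [Function.update_self, hb]
      · simp only [Function.update_of_ne hj]
        exact closure_subset_Icc (hI j).2 (hxc j (mem_univ j))
    rcases hor with h0 | h1
    · exact mem_iUnion.mpr ⟨(k, false), hmem false (by simp [he_def, h0])⟩
    · exact mem_iUnion.mpr ⟨(k, true), hmem true (by simp [he_def, h1])⟩
  · have : ∀ p : Fin n × Bool, brickVol (face p) = 0 := by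
      rintro ⟨k, b⟩
      apply brickVol_eq_zero_of_flat (k := k) (c := e k b)
      intro x hx
      have := hx k (mem_univ k)
      simpa [hface, Function.update_self] using this
    simp [this, hε]

end Aux

/-- If the characteristic function of `A ⊆ T` is K-integrable on the closed brick
`T = [a, b]`, then `A` is Jordan measurable (bounded with Jordan null boundary). -/
theorem jordanMeasurable_of_kIntegrable_indicator {n : ℕ} (hn : 1 ≤ n)
    (a b : Fin n → ℝ) (A : Set (Fin n → ℝ)) (hA : A ⊆ Set.Icc a b)
    (h : KIntegrable (Set.Icc a b) (A.indicator fun _ => (1 : ℝ))) :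
    Bornology.IsBounded A ∧ JordanNull (frontier A) := by
  classical
  obtain ⟨g, _, hnu⟩ := h
  refine ⟨(Metric.isBounded_Icc a b).subset hA, ?_⟩
  intro ε hε
  obtain ⟨M, B, hB, hvol, hunif⟩ := hnu (ε/2) (by linarith)
  obtain ⟨m, hm⟩ := (Metric.tendstoUniformlyOn_iff.mp hunif (1/2) (by norm_num)).exists
  have hTbrick : IsBrick (Set.Icc a b) :=
    ⟨fun k => Set.Icc (a k) (b k), fun k => ⟨ordConnected_Icc, Metric.isBounded_Icc _ _⟩,
      (Set.pi_univ_Icc a b).symm⟩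
  have hTclosed : IsClosed (Set.Icc a b) := isClosed_Icc
  have hN : JordanNull (frontier (Set.Icc a b) ∪ ⋃ i : Fin (g m).M, frontier ((g m).B i)) :=
    (jordanNull_frontier_of_isBrick hTbrick).union
      (jordanNull_iUnion _ fun i => jordanNull_frontier_of_isBrick ((g m).isBrick i))
  have hkey : frontier A ⊆ (⋃ j, brickHull (B j)) ∪
      (frontier (Set.Icc a b) ∪ ⋃ i : Fin (g m).M, frontier ((g m).B i)) := by
    intro x hx
    by_contra hcon
    simp only [mem_union, mem_iUnion, not_or, not_exists] at hcon
    obtain ⟨hx1, hx2, hx3⟩ := hcon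
    have hxA : x ∈ closure A := frontier_subset_closure hx
    have hxT : x ∈ (Set.Icc a b) := by
      have := closure_mono hA hxA
      rwa [hTclosed.closure_eq] at this
    have hxint : x ∈ interior (Set.Icc a b) := by
      by_contra hni
      exact hx2 ⟨subset_closure hxT, hni⟩
    set U : Set (Fin n → ℝ) := interior (Set.Icc a b) ∩ (⋂ j, (brickHull (B j))ᶜ) ∩
      ⋂ i, (if x ∈ closure ((g m).B i) then interior ((g m).B i)
            else (closure ((g m).B i))ᶜ) with hU
    have hUopen : IsOpen U := by
      refine (isOpen_interior.inter
        (isOpen_iInter_of_finite fun j => (isClosed_brickHull _).isOpen_compl)).inter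
        (isOpen_iInter_of_finite fun i => ?_)
      split
      · exact isOpen_interior
      · exact isClosed_closure.isOpen_compl
    have hxU : x ∈ U := by
      refine ⟨⟨hxint, mem_iInter.mpr fun j => hx1 j⟩, mem_iInter.mpr fun i => ?_⟩
      by_cases hcl : x ∈ closure ((g m).B i)
      · rw [if_pos hcl]
        by_contra hni
        exact hx3 i ⟨hcl, hni⟩
      · rw [if_neg hcl]
        exact hcl
    have hUE : U ⊆ (Set.Icc a b) \ ⋃ j, B j := by
      rintro y ⟨⟨hy1, hy2⟩, _⟩
      refine ⟨interior_subset hy1, ?_⟩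
      rw [mem_iUnion]
      rintro ⟨j, hj⟩
      exact (mem_iInter.mp hy2 j) (subset_brickHull (hB j).1 hj)
    have hind : ∀ y ∈ U, ∀ i, ((g m).B i).indicator (fun _ => (1:ℝ)) y
        = ((g m).B i).indicator (fun _ => (1:ℝ)) x := by
      intro y hy i
      have hyi := mem_iInter.mp hy.2 i
      by_cases hcl : x ∈ closure ((g m).B i)
      · rw [if_pos hcl] at hyi
        have hxi : x ∈ interior ((g m).B i) := by
          by_contra hni
          exact hx3 i ⟨hcl, hni⟩
        rw [Set.indicator_of_mem (interior_subset hyi), Set.indicator_of_mem (interior_subset hxi)]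
      · rw [if_neg hcl] at hyi
        rw [Set.indicator_of_notMem (fun hyP => hyi (subset_closure hyP)),
          Set.indicator_of_notMem (fun hxP => hcl (subset_closure hxP))]
    have hconst : ∀ y ∈ U, (g m).fn y = (g m).fn x := by
      intro y hy
      unfold StepRepr.fn
      exact Finset.sum_congr rfl fun i _ => by rw [hind y hy i]
    have hxc2 : x ∈ closure Aᶜ := by
      rw [frontier_eq_closure_inter_closure] at hx
      exact hx.2
    obtain ⟨y, hyU, hyA⟩ := mem_closure_iff.mp hxA U hUopen hxU
    obtain ⟨z, hzU, hzA⟩ := mem_closure_iff.mp hxc2 U hUopen hxU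
    have hy' := hm y (hUE hyU)
    have hz' := hm z (hUE hzU)
    rw [Set.indicator_of_mem hyA, hconst y hyU] at hy'
    rw [Set.indicator_of_notMem hzA, hconst z hzU] at hz'
    have htri : dist (1:ℝ) 0 ≤ dist (1:ℝ) ((g m).fn x) + dist ((g m).fn x) 0 :=
      dist_triangle _ _ _
    rw [show dist (1:ℝ) 0 = 1 by simp [Real.dist_eq], dist_comm ((g m).fn x) 0] at htri
    linarith
  have hcov1 : Precover (⋃ j, brickHull (B j)) (ε/2) := by
    refine precover_of_fintype (fun j : Fin M => brickHull (B j))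
      (fun j => isBrick_brickHull _) Set.Subset.rfl ?_
    calc ∑ j, brickVol (brickHull (B j)) = ∑ j, brickVol (B j) :=
          Finset.sum_congr rfl fun j _ => brickVol_brickHull (hB j).1
      _ < ε/2 := hvol
  have hres := Precover.mono hkey (hcov1.union (hN (ε/2) (by linarith)))
  rwa [add_halves] at hres
end

section
/- Let T ⊆ ℝⁿ be a closed brick. If f : T → ℝ is an unbounded K-integrable function, then there exists a bounded K-integrable function g : T → ℝ such that g = f outside a Jordan null set; consequently ∫_T f = ∫_T g. -/
open Set Filter MeasureTheory Topology

section Aux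

lemma vol_interval {s : Set ℝ} (hoc : s.OrdConnected) (hb : Bornology.IsBounded s)
    (hne : s.Nonempty) : volume s = ENNReal.ofReal (sSup s - sInf s) := by
  have hba := hb.bddAbove
  have hbb := hb.bddBelow
  have h1 : s ⊆ Icc (sInf s) (sSup s) := subset_Icc_csInf_csSup hbb hba
  have h2 : Ioo (sInf s) (sSup s) ⊆ s := by
    intro x hx
    obtain ⟨a', ha', hax⟩ := exists_lt_of_csInf_lt hne hx.1
    obtain ⟨b', hb', hxb⟩ := exists_lt_of_lt_csSup hne hx.2
    exact hoc.out ha' hb' ⟨hax.le, hxb.le⟩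
  refine le_antisymm ?_ ?_
  · calc volume s ≤ volume (Icc (sInf s) (sSup s)) := measure_mono h1
      _ = ENNReal.ofReal (sSup s - sInf s) := Real.volume_Icc
  · calc ENNReal.ofReal (sSup s - sInf s) = volume (Ioo (sInf s) (sSup s)) := Real.volume_Ioo.symm
      _ ≤ volume s := measure_mono h2

lemma brick_measurable {n : ℕ} {S : Set (Fin n → ℝ)} (h : IsBrick S) : MeasurableSet S := by
  obtain ⟨I, hI, rfl⟩ := h
  exact MeasurableSet.univ_pi fun k => (hI k).1.measurableSet

lemma brick_vol {n : ℕ} (hn : 1 ≤ n) {S : Set (Fin n → ℝ)} (h : IsBrick S) :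
    volume S = ENNReal.ofReal (brickVol S) ∧ 0 ≤ brickVol S ∧ volume S < ⊤ := by
  obtain ⟨I, hI, rfl⟩ := h
  rcases Set.eq_empty_or_nonempty (Set.univ.pi I) with he | hne
  · rw [he]
    have : brickVol (∅ : Set (Fin n → ℝ)) = 0 := by
      unfold brickVol
      rw [Finset.prod_eq_zero (Finset.mem_univ ⟨0, hn⟩)]
      simp [Real.sSup_empty, Real.sInf_empty]
    rw [this]
    simp
  · have himg : ∀ k, (fun x => x k) '' (Set.univ.pi I) = I k := fun k =>
      Set.eval_image_univ_pi hne
    have hIne : ∀ k, (I k).Nonempty := by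
      intro k; rw [← himg k]; exact hne.image _
    have hvol : ∀ k, volume (I k) = ENNReal.ofReal (sSup (I k) - sInf (I k)) :=
      fun k => vol_interval (hI k).1 (hI k).2 (hIne k)
    have hle : ∀ k, 0 ≤ sSup (I k) - sInf (I k) := by
      intro k
      have := csInf_le_csSup (hIne k) (hI k).2.bddBelow (hI k).2.bddAbove
      linarith
    have hbv : brickVol (Set.univ.pi I) = ∏ k : Fin n, (sSup (I k) - sInf (I k)) := by
      unfold brickVol
      exact Finset.prod_congr rfl fun k _ => by rw [himg k]
    refine ⟨?_, ?_, ?_⟩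
    · rw [volume_pi_pi, hbv, ENNReal.ofReal_prod_of_nonneg (fun k _ => hle k)]
      exact Finset.prod_congr rfl fun k _ => (hvol k)
    · rw [hbv]; exact Finset.prod_nonneg fun k _ => hle k
    · rw [volume_pi_pi]
      refine ENNReal.prod_lt_top fun k _ => ?_
      rw [hvol k]; exact ENNReal.ofReal_lt_top

lemma indicator_integrable {n : ℕ} {S : Set (Fin n → ℝ)} (hm : MeasurableSet S)
    (hfin : volume S < ⊤) :
    MeasureTheory.Integrable (S.indicator (fun _ => (1 : ℝ))) volume := by
  rw [MeasureTheory.integrable_indicator_iff hm]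
  exact MeasureTheory.integrableOn_const hfin.ne

lemma step_integrable {n : ℕ} (hn : 1 ≤ n) {T : Set (Fin n → ℝ)} (g : StepRepr T) :
    MeasureTheory.Integrable g.fn volume := by
  unfold StepRepr.fn
  refine MeasureTheory.integrable_finset_sum _ fun j _ => ?_
  exact ((indicator_integrable (brick_measurable (g.isBrick j))
    (brick_vol hn (g.isBrick j)).2.2)).const_mul _

lemma step_integral {n : ℕ} (hn : 1 ≤ n) {T : Set (Fin n → ℝ)} (g : StepRepr T) :
    ∫ x, g.fn x = g.integral := by
  unfold StepRepr.fn StepRepr.integral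
  rw [MeasureTheory.integral_finset_sum _ (fun j _ =>
    ((indicator_integrable (brick_measurable (g.isBrick j))
      (brick_vol hn (g.isBrick j)).2.2)).const_mul _)]
  refine Finset.sum_congr rfl fun j _ => ?_
  rw [MeasureTheory.integral_const_mul,
    MeasureTheory.integral_indicator_const (1 : ℝ) (brick_measurable (g.isBrick j))]
  have h := brick_vol hn (g.isBrick j)
  rw [measureReal_def, h.1, ENNReal.toReal_ofReal h.2.1]
  simp

lemma step_zero_outside {n : ℕ} {T : Set (Fin n → ℝ)} (g : StepRepr T) {x : Fin n → ℝ}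
    (hx : x ∉ T) : g.fn x = 0 := by
  unfold StepRepr.fn
  refine Finset.sum_eq_zero fun j _ => ?_
  rw [Set.indicator_of_notMem (fun h => hx (g.subset j h))]
  ring

end Aux

section Main

lemma integrals_cauchy {n : ℕ} (hn : 1 ≤ n) (a b : Fin n → ℝ)
    (G : ℕ → StepRepr (Set.Icc a b)) (f : (Fin n → ℝ) → ℝ)
    (h : NearlyUniformlyTo (Set.Icc a b) (fun m => (G m).fn) f) :
    CauchySeq (fun m => (G m).integral) := by
  obtain ⟨⟨C, hC⟩, hnu2⟩ := h
  set C' := max C 0 with hC'def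
  have hC'0 : (0:ℝ) ≤ C' := le_max_right _ _
  have hCb : ∀ m, ∀ x ∈ Set.Icc a b, |(G m).fn x| ≤ C' :=
    fun m x hx => (hC m x hx).trans (le_max_left _ _)
  have hTm : MeasurableSet (Set.Icc a b) := measurableSet_Icc
  have hTfin : volume (Set.Icc a b) < ⊤ := (isCompact_Icc).measure_lt_top
  set V := (volume (Set.Icc a b)).toReal with hVdef
  have hV0 : (0:ℝ) ≤ V := ENNReal.toReal_nonneg
  rw [Metric.cauchySeq_iff]
  intro ε hε
  set δ := ε / (4 * (C' + 1)) with hδdef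
  set ε' := ε / (4 * (V + 1)) with hε'def
  have hδ0 : 0 < δ := by positivity
  have hε'0 : 0 < ε' := by positivity
  obtain ⟨M, B, hB, hsum, htu⟩ := hnu2 δ hδ0
  rw [Metric.tendstoUniformlyOn_iff] at htu
  have hev := htu ε' hε'0
  rw [Filter.eventually_atTop] at hev
  obtain ⟨N, hN⟩ := hev
  refine ⟨N, fun m hm k hk => ?_⟩
  set E := ⋃ j, B j with hEdef
  have hEm : MeasurableSet E := MeasurableSet.iUnion fun j => brick_measurable (hB j).1
  have hsum0 : (0:ℝ) ≤ ∑ j, brickVol (B j) :=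
    Finset.sum_nonneg fun j _ => (brick_vol hn (hB j).1).2.1
  have h2 : ∑ j, volume (B j) = ENNReal.ofReal (∑ j, brickVol (B j)) := by
    rw [ENNReal.ofReal_sum_of_nonneg (fun j _ => (brick_vol hn (hB j).1).2.1)]
    exact Finset.sum_congr rfl fun j _ => (brick_vol hn (hB j).1).1
  have hEle : volume E ≤ ENNReal.ofReal (∑ j, brickVol (B j)) :=
    (measure_iUnion_fintype_le volume B).trans h2.le
  have hEvol : (volume E).toReal ≤ ∑ j, brickVol (B j) :=
    ENNReal.toReal_le_of_le_ofReal hsum0 hEle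
  have hEfin : volume E < ⊤ := hEle.trans_lt ENNReal.ofReal_lt_top
  set φ : (Fin n → ℝ) → ℝ := fun x =>
    (2*C') * E.indicator (fun _ => (1:ℝ)) x + (2*ε') * (Set.Icc a b).indicator (fun _ => (1:ℝ)) x
    with hφdef
  have hφnonneg : ∀ x, 0 ≤ φ x := by
    intro x
    have h1 : (0:ℝ) ≤ E.indicator (fun _ => (1:ℝ)) x := Set.indicator_nonneg (fun _ _ => one_pos.le) x
    have h2 : (0:ℝ) ≤ (Set.Icc a b).indicator (fun _ => (1:ℝ)) x :=
      Set.indicator_nonneg (fun _ _ => one_pos.le) x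
    have := hε'0.le
    positivity
  have hpt : ∀ x, |(G m).fn x - (G k).fn x| ≤ φ x := by
    intro x
    by_cases hxT : x ∈ Set.Icc a b
    · by_cases hxE : x ∈ E
      · have hbd : |(G m).fn x - (G k).fn x| ≤ 2*C' := by
          calc |(G m).fn x - (G k).fn x| ≤ |(G m).fn x| + |(G k).fn x| := abs_sub _ _
            _ ≤ C' + C' := add_le_add (hCb m x hxT) (hCb k x hxT)
            _ = 2*C' := by ring
        have h2 : (0:ℝ) ≤ (2*ε') * (Set.Icc a b).indicator (fun _ => (1:ℝ)) x := by
          have : (0:ℝ) ≤ (Set.Icc a b).indicator (fun _ => (1:ℝ)) x :=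
            Set.indicator_nonneg (fun _ _ => one_pos.le) x
          positivity
        have hE1 : E.indicator (fun _ => (1:ℝ)) x = 1 := Set.indicator_of_mem hxE _
        calc |(G m).fn x - (G k).fn x| ≤ 2*C' := hbd
          _ ≤ φ x := by rw [hφdef]; simp only [hE1]; linarith
      · have hdm := hN m hm x ⟨hxT, hxE⟩
        have hdk := hN k hk x ⟨hxT, hxE⟩
        rw [Real.dist_eq] at hdm hdk
        have hT1 : (Set.Icc a b).indicator (fun _ => (1:ℝ)) x = 1 := Set.indicator_of_mem hxT _
        have hE0 : (0:ℝ) ≤ (2*C') * E.indicator (fun _ => (1:ℝ)) x := by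
          have : (0:ℝ) ≤ E.indicator (fun _ => (1:ℝ)) x :=
            Set.indicator_nonneg (fun _ _ => one_pos.le) x
          positivity
        have : |(G m).fn x - (G k).fn x| ≤ 2*ε' := by
          have := abs_sub_le ((G m).fn x) (f x) ((G k).fn x)
          have e1 : |(G m).fn x - f x| = |f x - (G m).fn x| := abs_sub_comm _ _
          have e2 : |f x - (G k).fn x| < ε' := hdk
          linarith [hdm, e1 ▸ hdm]
        calc |(G m).fn x - (G k).fn x| ≤ 2*ε' := this
          _ ≤ φ x := by rw [hφdef]; simp only [hT1]; linarith
    · rw [step_zero_outside _ hxT, step_zero_outside _ hxT]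
      simpa using hφnonneg x
  have hφint : MeasureTheory.Integrable φ volume :=
    ((indicator_integrable hEm hEfin).const_mul _).add
      ((indicator_integrable hTm hTfin).const_mul _)
  have hdint : MeasureTheory.Integrable (fun x => (G m).fn x - (G k).fn x) volume :=
    (step_integrable hn (G m)).sub (step_integrable hn (G k))
  have hφval : ∫ x, φ x = (2*C') * (volume E).toReal + (2*ε') * V := by
    rw [hφdef]
    rw [MeasureTheory.integral_add ((indicator_integrable hEm hEfin).const_mul _)
      ((indicator_integrable hTm hTfin).const_mul _)]
    rw [MeasureTheory.integral_const_mul, MeasureTheory.integral_const_mul,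
      MeasureTheory.integral_indicator_const (1:ℝ) hEm,
      MeasureTheory.integral_indicator_const (1:ℝ) hTm]
    simp [hVdef, measureReal_def]
  have hmain : dist (G m).integral (G k).integral ≤ (2*C') * (volume E).toReal + (2*ε') * V := by
    rw [Real.dist_eq, ← step_integral hn (G m), ← step_integral hn (G k),
      ← MeasureTheory.integral_sub (step_integrable hn (G m)) (step_integrable hn (G k))]
    calc |∫ x, ((G m).fn x - (G k).fn x)| ≤ ∫ x, |(G m).fn x - (G k).fn x| := by
          simpa [Real.norm_eq_abs] using
            MeasureTheory.norm_integral_le_integral_norm (fun x => (G m).fn x - (G k).fn x)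
      _ ≤ ∫ x, φ x := MeasureTheory.integral_mono hdint.abs hφint hpt
      _ = _ := hφval
  have harith : (2*C') * (volume E).toReal + (2*ε') * V < ε := by
    have hEδ : (volume E).toReal < δ := lt_of_le_of_lt hEvol hsum
    have e1 : δ * (4 * (C' + 1)) = ε := div_mul_cancel₀ _ (by positivity)
    have e2 : ε' * (4 * (V + 1)) = ε := div_mul_cancel₀ _ (by positivity)
    nlinarith [mul_le_mul_of_nonneg_left hEδ.le (by positivity : (0:ℝ) ≤ 2*C'),
      ENNReal.toReal_nonneg (a := volume E)]
  exact lt_of_le_of_lt hmain harith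

end Main

/-- main -/
theorem exists_bounded_eq_jordan_ae {n : ℕ} (hn : 1 ≤ n) (a b : Fin n → ℝ)
    (f : (Fin n → ℝ) → ℝ) (hf : KIntegrable (Set.Icc a b) f)
    (hub : ¬ ∃ C : ℝ, ∀ x ∈ Set.Icc a b, |f x| ≤ C) :
    ∃ g : (Fin n → ℝ) → ℝ, KIntegrable (Set.Icc a b) g ∧
      (∃ C : ℝ, ∀ x ∈ Set.Icc a b, |g x| ≤ C) ∧
      JordanNull {x | x ∈ Set.Icc a b ∧ g x ≠ f x} ∧
      ∃ I : ℝ, HasKIntegral (Set.Icc a b) f I ∧ HasKIntegral (Set.Icc a b) g I := by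
  obtain ⟨G, hGnu⟩ := hf
  have hCau : CauchySeq (fun m => (G m).integral) := integrals_cauchy hn a b G f hGnu
  obtain ⟨I, hI⟩ := cauchySeq_tendsto_of_complete hCau
  obtain ⟨⟨C, hC⟩, hnu2⟩ := hGnu
  have hTne : (Set.Icc a b).Nonempty := by
    by_contra h
    rw [Set.not_nonempty_iff_eq_empty] at h
    exact hub ⟨0, fun x hx => by rw [h] at hx; exact absurd hx (Set.notMem_empty x)⟩
  have hC0 : (0:ℝ) ≤ C := (abs_nonneg _).trans (hC 0 hTne.choose hTne.choose_spec)
  have hkey : ∀ {M : ℕ} {B : Fin M → Set (Fin n → ℝ)},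
      TendstoUniformlyOn (fun m => (G m).fn) f atTop (Set.Icc a b \ ⋃ j, B j) →
      ∀ x ∈ Set.Icc a b \ ⋃ j, B j, |f x| ≤ C := by
    intro M B htu x hx
    have hpt := htu.tendsto_at hx
    exact le_of_tendsto hpt.abs (Filter.Eventually.of_forall fun m => hC m x hx.1)
  set g : (Fin n → ℝ) → ℝ := fun x => if |f x| ≤ C then f x else 0 with hgdef
  have hnug : NearlyUniformlyTo (Set.Icc a b) (fun m => (G m).fn) g := by
    refine ⟨⟨C, hC⟩, fun δ hδ => ?_⟩
    obtain ⟨M, B, h1, h2, h3⟩ := hnu2 δ hδ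
    refine ⟨M, B, h1, h2, h3.congr_right fun x hx => ?_⟩
    rw [hgdef]
    exact (if_pos (hkey h3 x hx)).symm
  refine ⟨g, ⟨G, hnug⟩, ⟨C, fun x hx => ?_⟩, ?_, I, ⟨G, ⟨⟨C, hC⟩, hnu2⟩, hI⟩, ⟨G, hnug, hI⟩⟩
  · by_cases h : |f x| ≤ C
    · simp only [hgdef, if_pos h]; exact h
    · simp only [hgdef, if_neg h]; simpa using hC0
  · intro ε hε
    obtain ⟨M, B, h1, h2, h3⟩ := hnu2 ε hε
    refine ⟨M, B, fun j => (h1 j).1, ?_, h2⟩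
    intro x hx
    obtain ⟨hxT, hxne⟩ := hx
    by_contra hxE
    exact hxne (if_pos (hkey h3 x ⟨hxT, hxE⟩))
end

section
/- Let T ⊆ ℝⁿ be a closed brick. Every bounded K-integrable function f : T → ℝ is Riemann integrable on T, and its K-integral equals its Riemann integral. -/
open Set Filter MeasureTheory Topology

/-- `f` has Riemann integral `I` on the closed brick `[a, b] ⊆ ℝⁿ`: for every `ε > 0`
there is `δ > 0` such that every tagged partition of `[a, b]` into closed bricks of
mesh `< δ` has Riemann sum within `ε` of `I`. -/
def HasRiemannIntegral {n : ℕ} (a b : Fin n → ℝ) (f : (Fin n → ℝ) → ℝ) (I : ℝ) : Prop :=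
  ∀ ε > (0 : ℝ), ∃ δ > (0 : ℝ), ∀ (N : ℕ) (l u ξ : Fin N → Fin n → ℝ),
    (∀ i, l i ≤ u i) →
    (⋃ i, Set.Icc (l i) (u i)) = Set.Icc a b →
    (∀ i j, i ≠ j →
      interior (Set.Icc (l i) (u i)) ∩ interior (Set.Icc (l j) (u j)) = ∅) →
    (∀ i, ξ i ∈ Set.Icc (l i) (u i)) →
    (∀ i k, u i k - l i k < δ) →
    |(∑ i, f (ξ i) * ∏ k, (u i k - l i k)) - I| < ε

lemma brick_sandwich {n : ℕ} (hn : 1 ≤ n) {B : Set (Fin n → ℝ)} (hB : IsBrick B) :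
    ∃ α β : Fin n → ℝ, α ≤ β ∧ Set.univ.pi (fun k => Set.Ioo (α k) (β k)) ⊆ B ∧
      B ⊆ Set.Icc α β ∧ brickVol B = ∏ k, (β k - α k) := by
  obtain ⟨I, hI, rfl⟩ := hB
  rcases eq_empty_or_nonempty (Set.univ.pi I) with he | hne
  · refine ⟨0, 0, le_refl _, ?_, ?_, ?_⟩
    · rw [Set.univ_pi_eq_empty (i := ⟨0, by omega⟩) (by simp)]
      exact empty_subset _
    · simp [he]
    · rw [he, brickVol]
      simp only [Set.image_empty, Real.sSup_empty, Real.sInf_empty, sub_zero]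
      simp only [Pi.zero_apply, sub_zero, Finset.prod_const, zero_pow (by omega : n ≠ 0)]
  · have hIne : ∀ k, (I k).Nonempty := fun k => by
      obtain ⟨x, hx⟩ := hne; exact ⟨x k, hx k (mem_univ k)⟩
    have hbdd : ∀ k, BddBelow (I k) ∧ BddAbove (I k) := fun k =>
      ⟨(hI k).2.bddBelow, (hI k).2.bddAbove⟩
    refine ⟨fun k => sInf (I k), fun k => sSup (I k), fun k =>
      csInf_le_csSup (hIne k) (hbdd k).1 (hbdd k).2, ?_, ?_, ?_⟩
    · intro x hx k _
      have h1 := (hx k (mem_univ k)).1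
      have h2 := (hx k (mem_univ k)).2
      obtain ⟨p, hp, hpx⟩ := (csInf_lt_iff (hbdd k).1 (hIne k)).mp h1
      obtain ⟨q, hq, hxq⟩ := (lt_csSup_iff (hbdd k).2 (hIne k)).mp h2
      exact (hI k).1.out hp hq ⟨hpx.le, hxq.le⟩
    · rw [← Set.pi_univ_Icc]
      exact Set.pi_mono fun k _ y hy => ⟨csInf_le (hbdd k).1 hy, le_csSup (hbdd k).2 hy⟩
    · unfold brickVol
      refine Finset.prod_congr rfl fun k _ => ?_
      rw [show (fun x => x k) '' Set.univ.pi I = I k from Set.eval_image_univ_pi hne]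

lemma core_brick {n : ℕ} (a b : Fin n → ℝ) (B : Set (Fin n → ℝ))
    (α β : Fin n → ℝ) (hαβ : α ≤ β)
    (hBl : Set.univ.pi (fun k => Set.Ioo (α k) (β k)) ⊆ B)
    (hBT : B ⊆ Set.Icc a b)
    (hBu : B ⊆ Set.Icc α β)
    {η : ℝ} (hη : 0 < η) :
    ∃ δ > (0:ℝ), ∀ (N : ℕ) (l u ξ : Fin N → Fin n → ℝ),
      (∀ i, l i ≤ u i) →
      (⋃ i, Set.Icc (l i) (u i)) = Set.Icc a b →
      (∀ i j, i ≠ j →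
        interior (Set.Icc (l i) (u i)) ∩ interior (Set.Icc (l j) (u j)) = ∅) →
      (∀ i, ξ i ∈ Set.Icc (l i) (u i)) →
      (∀ i k, u i k - l i k < δ) →
      |(∑ i, (B.indicator (fun _ => (1:ℝ)) (ξ i)) * ∏ k, (u i k - l i k)) -
        ∏ k, (β k - α k)| ≤ η := by
  set P : ℝ := ∏ k, (β k - α k) with hP
  have hcont1 : ContinuousAt (fun t : ℝ => ∏ k : Fin n, (β k - α k + 2*t)) 0 := by
    apply Continuous.continuousAt; continuity
  have hcont2 : ContinuousAt (fun t : ℝ => ∏ k : Fin n, max (β k - α k - 2*t) 0) 0 := by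
    apply Continuous.continuousAt
    apply continuous_finset_prod
    intro k _
    exact (continuous_const.sub (continuous_const.mul continuous_id)).max continuous_const
  have hval1 : (fun t : ℝ => ∏ k : Fin n, (β k - α k + 2*t)) 0 = P := by simp [hP]
  have hval2 : (fun t : ℝ => ∏ k : Fin n, max (β k - α k - 2*t) 0) 0 = P := by
    simp only [mul_zero, sub_zero]
    exact Finset.prod_congr rfl fun k _ => max_eq_left (by linarith [hαβ k])
  have h1 : ∀ᶠ t in 𝓝 (0:ℝ), (∏ k : Fin n, (β k - α k + 2*t)) < P + η :=
    hcont1.tendsto.eventually_lt_const (by rw [show (∏ k : Fin n, (β k - α k + 2*(0:ℝ))) = P from hval1]; linarith)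
  have h2 : ∀ᶠ t in 𝓝 (0:ℝ), P - η < ∏ k : Fin n, max (β k - α k - 2*t) 0 :=
    hcont2.tendsto.eventually_const_lt (by rw [show (∏ k : Fin n, max (β k - α k - 2*(0:ℝ)) 0) = P from hval2]; linarith)
  obtain ⟨r, hr, hball⟩ := Metric.eventually_nhds_iff.mp (h1.and h2)
  classical
  refine ⟨r/2, by linarith, ?_⟩
  intro N l u ξ hlu hcover hdisj hξ hmesh
  set δ : ℝ := r/2 with hδdef
  have hδpos : (0:ℝ) < δ := by positivity
  obtain ⟨hΦ, hΨ⟩ := hball (y := δ)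
    (by rw [Real.dist_eq, sub_zero, abs_of_pos hδpos, hδdef]; linarith)
  set Φ : ℝ := ∏ k : Fin n, (β k - α k + 2*δ)
  set Ψ : ℝ := ∏ k : Fin n, max (β k - α k - 2*δ) 0
  set v : Fin N → ℝ := fun i => ∏ k, (u i k - l i k) with hv
  have hv0 : ∀ i, 0 ≤ v i := fun i =>
    Finset.prod_nonneg fun k _ => by linarith [hlu i k]
  set S : Finset (Fin N) := Finset.univ.filter (fun i => ξ i ∈ B) with hS
  have hsum : (∑ i, (B.indicator (fun _ => (1:ℝ)) (ξ i)) * v i) = ∑ i ∈ S, v i := by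
    rw [hS, Finset.sum_filter]
    refine Finset.sum_congr rfl fun i _ => ?_
    by_cases h : ξ i ∈ B <;> simp [Set.indicator_apply, h]
  rw [hsum]
  -- volumes
  have hofv : ∀ i, ENNReal.ofReal (v i) = volume (Set.Icc (l i) (u i)) := by
    intro i
    rw [Real.volume_Icc_pi, hv, ENNReal.ofReal_prod_of_nonneg]
    intro k _; linarith [hlu i k]
  have hofv' : ∀ i, ENNReal.ofReal (v i) =
      volume (Set.univ.pi (fun k => Set.Ioo (l i k) (u i k))) := by
    intro i
    rw [volume_pi_pi, hv, ENNReal.ofReal_prod_of_nonneg (fun k _ => by linarith [hlu i k])]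
    simp [Real.volume_Ioo]
  have hofW : ENNReal.ofReal (∑ i ∈ S, v i) = ∑ i ∈ S, ENNReal.ofReal (v i) :=
    ENNReal.ofReal_sum_of_nonneg fun i _ => hv0 i
  have hint : ∀ i, interior (Set.Icc (l i) (u i)) =
      Set.univ.pi (fun k => Set.Ioo (l i k) (u i k)) := by
    intro i
    rw [← Set.pi_univ_Icc, interior_pi_set Set.finite_univ]
    exact Set.pi_congr rfl fun k _ => interior_Icc
  -- upper bound
  have hupper : (∑ i ∈ S, v i) ≤ Φ := by
    have hdis : (S : Set (Fin N)).Pairwise (Function.onFun Disjoint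
        (fun i => Set.univ.pi (fun k => Set.Ioo (l i k) (u i k)))) := by
      intro i _ j _ hij
      rw [Function.onFun, Set.disjoint_iff_inter_eq_empty, ← hint i, ← hint j]
      exact hdisj i j hij
    have hmeas : ∀ i ∈ S, MeasurableSet (Set.univ.pi (fun k => Set.Ioo (l i k) (u i k))) :=
      fun i _ => MeasurableSet.univ_pi fun k => measurableSet_Ioo
    have hEq := measure_biUnion_finset hdis hmeas (μ := volume)
    have hsub : (⋃ i ∈ S, Set.univ.pi (fun k => Set.Ioo (l i k) (u i k))) ⊆
        Set.Icc (fun k => α k - δ) (fun k => β k + δ) := by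
      intro x hx
      simp only [Set.mem_iUnion] at hx
      obtain ⟨i, hiS, hxi⟩ := hx
      have hξB : ξ i ∈ B := (Finset.mem_filter.mp hiS).2
      have hξαβ := hBu hξB
      constructor <;> intro k
      · have h1 := (hxi k (Set.mem_univ k)).1
        have h2 := (hxi k (Set.mem_univ k)).2
        have := (hξαβ.1 k)
        have hm := hmesh i k
        have := (hξ i).2 k
        have := (hξ i).1 k
        simp only
        linarith
      · have h1 := (hxi k (Set.mem_univ k)).1
        have h2 := (hxi k (Set.mem_univ k)).2
        have := (hξαβ.2 k)
        have hm := hmesh i k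
        have := (hξ i).2 k
        have := (hξ i).1 k
        simp only
        linarith
    have hle : ENNReal.ofReal (∑ i ∈ S, v i) ≤ ENNReal.ofReal Φ := by
      rw [hofW]
      calc ∑ i ∈ S, ENNReal.ofReal (v i)
          = ∑ i ∈ S, volume (Set.univ.pi (fun k => Set.Ioo (l i k) (u i k))) := by
            exact Finset.sum_congr rfl fun i _ => hofv' i
        _ = volume (⋃ i ∈ S, Set.univ.pi (fun k => Set.Ioo (l i k) (u i k))) := hEq.symm
        _ ≤ volume (Set.Icc (fun k => α k - δ) (fun k => β k + δ)) := measure_mono hsub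
        _ = ENNReal.ofReal Φ := by
            rw [Real.volume_Icc_pi, ENNReal.ofReal_prod_of_nonneg
              (fun k _ => by linarith [hαβ k])]
            exact Finset.prod_congr rfl fun k _ => show ENNReal.ofReal (β k + δ - (α k - δ)) = _ by congr 1; ring
    have hΦ0 : (0:ℝ) ≤ Φ := Finset.prod_nonneg fun k _ => by linarith [hαβ k]
    exact (ENNReal.ofReal_le_ofReal_iff hΦ0).mp hle
  have hlower : Ψ ≤ ∑ i ∈ S, v i := by
    by_cases hdeg : ∀ k, 0 < β k - α k - 2*δ
    · have hcov : Set.Icc (fun k => α k + δ) (fun k => β k - δ) ⊆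
          ⋃ i ∈ S, Set.Icc (l i) (u i) := by
        intro y hy
        have hyB : y ∈ B := hBl (fun k _ => by
          have h1 := hy.1 k; have h2 := hy.2 k
          simp only at h1 h2
          exact ⟨by linarith, by linarith⟩)
        have hyT : y ∈ ⋃ i, Set.Icc (l i) (u i) := by rw [hcover]; exact hBT hyB
        obtain ⟨i, hi⟩ := Set.mem_iUnion.mp hyT
        have hiS : i ∈ S := by
          refine Finset.mem_filter.mpr ⟨Finset.mem_univ _, hBl fun k _ => ?_⟩
          have h1 := hy.1 k; have h2 := hy.2 k
          have hm := hmesh i k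
          have hx1 := (hξ i).1 k; have hx2 := (hξ i).2 k
          have hy1 := hi.1 k; have hy2 := hi.2 k
          simp only at h1 h2 ⊢
          exact ⟨by linarith, by linarith⟩
        exact Set.mem_biUnion hiS hi
      have hle : ENNReal.ofReal Ψ ≤ ENNReal.ofReal (∑ i ∈ S, v i) := by
        rw [hofW]
        calc ENNReal.ofReal Ψ
            = volume (Set.Icc (fun k => α k + δ) (fun k => β k - δ)) := by
              rw [Real.volume_Icc_pi,
                ENNReal.ofReal_prod_of_nonneg (fun k _ => le_max_right _ _)]
              refine Finset.prod_congr rfl fun k _ => ?_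
              rw [max_eq_left (le_of_lt (hdeg k))]
              show ENNReal.ofReal _ = ENNReal.ofReal ((fun k => β k - δ) k - (fun k => α k + δ) k)
              congr 1; ring
          _ ≤ volume (⋃ i ∈ S, Set.Icc (l i) (u i)) := measure_mono hcov
          _ ≤ ∑ i ∈ S, volume (Set.Icc (l i) (u i)) := measure_biUnion_finset_le _ _
          _ = ∑ i ∈ S, ENNReal.ofReal (v i) := Finset.sum_congr rfl fun i _ => (hofv i).symm
      exact (ENNReal.ofReal_le_ofReal_iff (Finset.sum_nonneg fun i _ => hv0 i)).mp hle
    · push_neg at hdeg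
      obtain ⟨k, hk⟩ := hdeg
      have hΨ0 : Ψ = 0 := Finset.prod_eq_zero (Finset.mem_univ k) (max_eq_right hk)
      rw [hΨ0]; exact Finset.sum_nonneg fun i _ => hv0 i
  rw [abs_le]
  constructor <;> linarith

lemma core_multi {n : ℕ} (hn : 1 ≤ n) (a b : Fin n → ℝ) {M : ℕ}
    (B : Fin M → Set (Fin n → ℝ))
    (hB : ∀ j, IsBrick (B j)) (hBT : ∀ j, B j ⊆ Set.Icc a b)
    {η : ℝ} (hη : 0 < η) :
    ∃ δ > (0:ℝ), ∀ (N : ℕ) (l u ξ : Fin N → Fin n → ℝ),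
      (∀ i, l i ≤ u i) →
      (⋃ i, Set.Icc (l i) (u i)) = Set.Icc a b →
      (∀ i j, i ≠ j →
        interior (Set.Icc (l i) (u i)) ∩ interior (Set.Icc (l j) (u j)) = ∅) →
      (∀ i, ξ i ∈ Set.Icc (l i) (u i)) →
      (∀ i k, u i k - l i k < δ) →
      ∀ j, |(∑ i, ((B j).indicator (fun _ => (1:ℝ)) (ξ i)) * ∏ k, (u i k - l i k)) -
        brickVol (B j)| ≤ η := by
  choose α β hαβ hBl hBu hvol using fun j => brick_sandwich hn (hB j)
  choose d hd0 hdP using fun j =>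
    core_brick a b (B j) (α j) (β j) (hαβ j) (hBl j) (hBT j) (hBu j) hη
  obtain ⟨δ, hδ0, hδle⟩ : ∃ δ > (0:ℝ), ∀ j, δ ≤ d j := by
    rcases Nat.eq_zero_or_pos M with rfl | hM
    · exact ⟨1, one_pos, fun j => j.elim0⟩
    · obtain ⟨j₀, _, hj₀⟩ := Finset.exists_min_image Finset.univ d ⟨⟨0, hM⟩, Finset.mem_univ _⟩
      exact ⟨d j₀, hd0 j₀, fun j => hj₀ j (Finset.mem_univ j)⟩
  refine ⟨δ, hδ0, fun N l u ξ h1 h2 h3 h4 h5 j => ?_⟩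
  rw [hvol j]
  exact hdP j N l u ξ h1 h2 h3 h4 (fun i k => lt_of_lt_of_le (h5 i k) (hδle j))

lemma brick_ae_eq {n : ℕ} (hn : 1 ≤ n) {B : Set (Fin n → ℝ)} (hB : IsBrick B) :
    ∃ α β : Fin n → ℝ, α ≤ β ∧ brickVol B = ∏ k, (β k - α k) ∧
      (B.indicator (fun _ => (1:ℝ)) =ᵐ[volume] (Set.Icc α β).indicator (fun _ => (1:ℝ))) := by
  obtain ⟨α, β, hαβ, hBl, hBu, hvol⟩ := brick_sandwich hn hB
  refine ⟨α, β, hαβ, hvol, ?_⟩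
  have hvol_eq : volume (Set.univ.pi fun k => Set.Ioo (α k) (β k)) = volume (Set.Icc α β) := by
    rw [Real.volume_Icc_pi, volume_pi_pi]
    simp [Real.volume_Ioo]
  have hsub : (Set.univ.pi fun k => Set.Ioo (α k) (β k)) ⊆ Set.Icc α β := by
    rw [← Set.pi_univ_Icc]; exact Set.pi_mono fun k _ => Set.Ioo_subset_Icc_self
  have hnull : volume (Set.Icc α β \ Set.univ.pi fun k => Set.Ioo (α k) (β k)) = 0 := by
    rw [measure_diff hsub (MeasurableSet.univ_pi fun k => measurableSet_Ioo).nullMeasurableSet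
      (by rw [hvol_eq]; exact measure_Icc_lt_top.ne), hvol_eq]
    exact tsub_self _
  rw [Filter.eventuallyEq_iff_exists_mem]
  refine ⟨(Set.Icc α β \ Set.univ.pi fun k => Set.Ioo (α k) (β k))ᶜ,
    by rw [mem_ae_iff, compl_compl]; exact hnull, fun x hx => ?_⟩
  simp only [Set.mem_compl_iff, Set.mem_diff, not_and, not_not] at hx
  by_cases hxI : x ∈ Set.Icc α β
  · have hxB : x ∈ B := hBl (hx hxI)
    simp [Set.indicator_apply, hxB, hxI]
  · have hxB : x ∉ B := fun h => hxI (hBu h)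
    simp [Set.indicator_apply, hxB, hxI]



lemma step_facts {n : ℕ} (hn : 1 ≤ n) {T : Set (Fin n → ℝ)} (g : StepRepr T) :
    ∃ h : (Fin n → ℝ) → ℝ, Measurable h ∧ g.fn =ᵐ[volume] h ∧
      Integrable g.fn volume ∧ ∫ x, g.fn x = g.integral := by
  choose α β hαβ hvol hae using fun j => brick_ae_eq hn (g.isBrick j)
  set h : (Fin n → ℝ) → ℝ :=
    fun x => ∑ j, g.c j * (Set.Icc (α j) (β j)).indicator (fun _ => (1:ℝ)) x with hh
  have hmeas : Measurable h :=
    Finset.measurable_sum _ fun j _ =>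
      ((measurable_const.indicator measurableSet_Icc)).const_mul _
  have haeeq : g.fn =ᵐ[volume] h := by
    have hall : ∀ᵐ x ∂(volume : Measure (Fin n → ℝ)), ∀ j,
        (g.B j).indicator (fun _ => (1:ℝ)) x
          = (Set.Icc (α j) (β j)).indicator (fun _ => (1:ℝ)) x :=
      ae_all_iff.mpr fun j => hae j
    filter_upwards [hall] with x hx
    exact Finset.sum_congr rfl fun j _ => by rw [hx j]
  have hint_h : Integrable h volume :=
    integrable_finset_sum _ fun j _ =>
      (((integrable_indicator_iff measurableSet_Icc).mpr
        ((integrableOn_const_iff).mpr (Or.inr measure_Icc_lt_top)))).const_mul _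
  have hint : Integrable g.fn volume := hint_h.congr haeeq.symm
  refine ⟨h, hmeas, haeeq, hint, ?_⟩
  rw [integral_congr_ae haeeq, hh]
  have : ∀ j : Fin g.M, Integrable
      (fun x => g.c j * (Set.Icc (α j) (β j)).indicator (fun _ => (1:ℝ)) x) volume :=
    fun j => (((integrable_indicator_iff measurableSet_Icc).mpr
      ((integrableOn_const_iff).mpr (Or.inr measure_Icc_lt_top)))).const_mul _
  rw [integral_finset_sum _ fun j _ => this j]
  unfold StepRepr.integral
  refine Finset.sum_congr rfl fun j _ => ?_
  rw [integral_const_mul, integral_indicator_const (1:ℝ) measurableSet_Icc, hvol j,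
    measureReal_def, Real.volume_Icc_pi_toReal (hαβ j), smul_eq_mul, mul_one]
lemma brickVol_nonneg {n : ℕ} (hn : 1 ≤ n) {B : Set (Fin n → ℝ)} (hB : IsBrick B) :
    0 ≤ brickVol B ∧ volume B ≤ ENNReal.ofReal (brickVol B) := by
  obtain ⟨α, β, hαβ, _, hBu, hvol⟩ := brick_sandwich hn hB
  constructor
  · rw [hvol]; exact Finset.prod_nonneg fun k _ => by linarith [hαβ k]
  · calc volume B ≤ volume (Set.Icc α β) := measure_mono hBu
      _ = ENNReal.ofReal (brickVol B) := by
          rw [Real.volume_Icc_pi, hvol,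
            ENNReal.ofReal_prod_of_nonneg fun k _ => by linarith [hαβ k]]

lemma integrals_tendsto {n : ℕ} (hn : 1 ≤ n) (a b : Fin n → ℝ)
    (f : (Fin n → ℝ) → ℝ) (g : ℕ → StepRepr (Set.Icc a b))
    (hg : NearlyUniformlyTo (Set.Icc a b) (fun m => (g m).fn) f) :
    Tendsto (fun m => (g m).integral) atTop (𝓝 (∫ x in Set.Icc a b, f x)) := by
  obtain ⟨⟨C, hC⟩, hnu⟩ := hg
  choose M B hBprop hBvol hBunif using fun k : ℕ =>
    hnu (1/(k+1)) (by positivity)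
  choose h hmeas haeeq hint hieq using fun m => step_facts hn (g m)
  set Z : Set (Fin n → ℝ) := ⋂ k : ℕ, ⋃ j, B k j with hZdef
  have hZ : volume Z = 0 := by
    have hle : ∀ k : ℕ, volume Z ≤ ENNReal.ofReal (1/(k+1)) := by
      intro k
      calc volume Z ≤ volume (⋃ j, B k j) := measure_mono (Set.iInter_subset _ k)
        _ ≤ ∑ j, volume (B k j) := measure_iUnion_fintype_le _ _
        _ ≤ ∑ j, ENNReal.ofReal (brickVol (B k j)) :=
            Finset.sum_le_sum fun j _ => (brickVol_nonneg hn (hBprop k j).1).2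
        _ = ENNReal.ofReal (∑ j, brickVol (B k j)) :=
            (ENNReal.ofReal_sum_of_nonneg fun j _ => (brickVol_nonneg hn (hBprop k j).1).1).symm
        _ ≤ ENNReal.ofReal (1/(k+1)) := ENNReal.ofReal_le_ofReal (hBvol k).le
    refine le_antisymm ?_ (by simp)
    have htend : Tendsto (fun k : ℕ => ENNReal.ofReal (1/(k+1))) atTop (𝓝 0) := by
      rw [show (0 : ENNReal) = ENNReal.ofReal 0 by simp]
      exact (ENNReal.continuous_ofReal.tendsto 0).comp tendsto_one_div_add_atTop_nhds_zero_nat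
    exact ge_of_tendsto' htend hle
  have key := MeasureTheory.tendsto_integral_of_dominated_convergence
    (μ := volume.restrict (Set.Icc a b)) (F := fun m => (g m).fn) (f := f)
    (bound := fun _ => C)
    (fun m => ⟨h m, (hmeas m).stronglyMeasurable, ae_restrict_of_ae (haeeq m)⟩)
    ((integrableOn_const_iff).mpr (Or.inr measure_Icc_lt_top))
    (fun m => (ae_restrict_iff' measurableSet_Icc).mpr (ae_of_all _ fun x hx => by
      rw [Real.norm_eq_abs]; exact hC m x hx))
    ?_
  · refine key.congr fun m => ?_
    rw [setIntegral_eq_integral_of_forall_compl_eq_zero (fun x hx => ?_),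
      hieq m]
    unfold StepRepr.fn
    refine Finset.sum_eq_zero fun j _ => ?_
    rw [Set.indicator_of_notMem (fun hmem => hx ((g m).subset j hmem)), mul_zero]
  · filter_upwards [ae_restrict_mem measurableSet_Icc,
      ae_restrict_of_ae (measure_eq_zero_iff_ae_notMem.mp hZ)] with x hxT hxZ
    rw [hZdef, Set.mem_iInter] at hxZ
    push_neg at hxZ
    obtain ⟨k, hk⟩ := hxZ
    exact (hBunif k).tendsto_at ⟨hxT, hk⟩

set_option maxHeartbeats 2000000

/-- Every bounded K-integrable function on a closed brick `T = [a, b]` is Riemann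
integrable, and its K-integral equals its Riemann integral. -/
theorem riemann_integrable_of_bounded_kIntegrable {n : ℕ} (hn : 1 ≤ n)
    (a b : Fin n → ℝ) (f : (Fin n → ℝ) → ℝ)
    (hK : KIntegrable (Set.Icc a b) f)
    (hb : ∃ C : ℝ, ∀ x ∈ Set.Icc a b, |f x| ≤ C) :
    (∃ I : ℝ, HasKIntegral (Set.Icc a b) f I ∧ HasRiemannIntegral a b f I) ∧
    ∀ I : ℝ, HasKIntegral (Set.Icc a b) f I → HasRiemannIntegral a b f I := by
  classical
  obtain ⟨g, hnu⟩ := hK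
  set I : ℝ := ∫ x in Set.Icc a b, f x with hIdef
  have htend := integrals_tendsto hn a b f g hnu
  have hKI : HasKIntegral (Set.Icc a b) f I := ⟨g, hnu, htend⟩
  have huniq : ∀ I', HasKIntegral (Set.Icc a b) f I' → I' = I := by
    rintro I' ⟨g', hnu', htend'⟩
    exact tendsto_nhds_unique htend' (integrals_tendsto hn a b f g' hnu')
  have hR : HasRiemannIntegral a b f I := by
    by_cases hab : a ≤ b
    swap
    · intro ε hε
      refine ⟨1, one_pos, fun N l u ξ hlu hcover hdisj hξ hmesh => ?_⟩
      have hempty : Set.Icc a b = ∅ := Set.Icc_eq_empty hab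
      have hNe : IsEmpty (Fin N) := by
        by_contra h
        rw [not_isEmpty_iff] at h
        obtain ⟨i⟩ := h
        have hmem : ξ i ∈ Set.Icc a b := by
          rw [← hcover]; exact Set.mem_iUnion.mpr ⟨i, hξ i⟩
        rw [hempty] at hmem; exact hmem
      have hI0 : I = 0 := by rw [hIdef, hempty]; simp
      rw [Finset.univ_eq_empty, Finset.sum_empty, hI0]
      simpa using hε
    · intro ε hε
      obtain ⟨Cf, hCf⟩ := hb
      obtain ⟨⟨Cg, hCg⟩, hnu2⟩ := hnu
      set C : ℝ := max (max Cg Cf) 0 with hCdef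
      have hC0 : (0:ℝ) ≤ C := le_max_right _ _
      have hCgC : Cg ≤ C := le_trans (le_max_left _ _) (le_max_left _ _)
      have hCfC : Cf ≤ C := le_trans (le_max_right _ _) (le_max_left _ _)
      set δ₀ : ℝ := ε/(20*(C+1)) with hδ₀def
      have hδ₀pos : 0 < δ₀ := by positivity
      obtain ⟨Mb, Bb, hBbprop, hBbvol, hBbunif⟩ := hnu2 δ₀ hδ₀pos
      set V : ℝ := ∏ k, (b k - a k) with hVdef
      have hV0 : 0 ≤ V := Finset.prod_nonneg fun k _ => by linarith [hab k]
      set ε₁ : ℝ := ε/(5*(V+1)) with hε₁def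
      have hε₁pos : 0 < ε₁ := by positivity
      have hm2 := Metric.tendsto_nhds.mp htend (ε/5) (by positivity)
      obtain ⟨m, hm_unif, hm_int⟩ :=
        ((Metric.tendstoUniformlyOn_iff.mp hBbunif ε₁ hε₁pos).and hm2).exists
      set s := g m with hsdef
      set A : ℝ := ∑ j, |s.c j| with hAdef
      have hA0 : 0 ≤ A := Finset.sum_nonneg fun j _ => abs_nonneg _
      set η : ℝ := min (min (ε/(5*(A+1))) (δ₀/(Mb+1))) 1 with hηdef
      have hηpos : 0 < η := lt_min (lt_min (by positivity) (by positivity)) one_pos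
      have hη1 : η ≤ 1 := min_le_right _ _
      have hηA : η ≤ ε/(5*(A+1)) := le_trans (min_le_left _ _) (min_le_left _ _)
      have hηM : η ≤ δ₀/(Mb+1) := le_trans (min_le_left _ _) (min_le_right _ _)
      obtain ⟨δ1, hδ1, hcore1⟩ := core_multi hn a b s.B s.isBrick s.subset hηpos
      obtain ⟨δ2, hδ2, hcore2⟩ := core_multi hn a b Bb (fun j => (hBbprop j).1)
        (fun j => (hBbprop j).2) hηpos
      obtain ⟨δ3, hδ3, hcore3⟩ := core_brick a b (Set.Icc a b) a b hab
        (by rw [← Set.pi_univ_Icc]; exact Set.pi_mono fun k _ => Set.Ioo_subset_Icc_self)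
        subset_rfl subset_rfl hηpos
      refine ⟨min δ1 (min δ2 δ3), by positivity, ?_⟩
      intro N l u ξ hlu hcover hdisj hξ hmesh
      have hmesh1 : ∀ i k, u i k - l i k < δ1 := fun i k =>
        lt_of_lt_of_le (hmesh i k) (min_le_left _ _)
      have hmesh2 : ∀ i k, u i k - l i k < δ2 := fun i k =>
        lt_of_lt_of_le (hmesh i k) (le_trans (min_le_right _ _) (min_le_left _ _))
      have hmesh3 : ∀ i k, u i k - l i k < δ3 := fun i k =>
        lt_of_lt_of_le (hmesh i k) (le_trans (min_le_right _ _) (min_le_right _ _))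
      set v : Fin N → ℝ := fun i => ∏ k, (u i k - l i k) with hvdef
      have hv0 : ∀ i, 0 ≤ v i := fun i => Finset.prod_nonneg fun k _ => by linarith [hlu i k]
      have hξT : ∀ i, ξ i ∈ Set.Icc a b := fun i => by
        rw [← hcover]; exact Set.mem_iUnion.mpr ⟨i, hξ i⟩
      -- total volume bound
      have hF1 : |(∑ i, v i) - V| ≤ η := by
        have h := hcore3 N l u ξ hlu hcover hdisj hξ hmesh3
        have heq : (∑ i, ((Set.Icc a b).indicator (fun _ => (1:ℝ)) (ξ i)) *
            ∏ k, (u i k - l i k)) = ∑ i, v i :=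
          Finset.sum_congr rfl fun i _ => by
            rw [Set.indicator_of_mem (hξT i), one_mul]
        rwa [heq] at h
      have hsumv : ∑ i, v i ≤ V + 1 := by
        have := (abs_le.mp hF1).2; linarith
      have hF2 := hcore1 N l u ξ hlu hcover hdisj hξ hmesh1
      have hF3 := hcore2 N l u ξ hlu hcover hdisj hξ hmesh2
      -- Term 2 : step function Riemann sum close to its integral
      have hS2 : (∑ i, s.fn (ξ i) * v i)
          = ∑ j, s.c j * ∑ i, ((s.B j).indicator (fun _ => (1:ℝ)) (ξ i)) * v i := by
        unfold StepRepr.fn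
        simp_rw [Finset.sum_mul]
        rw [Finset.sum_comm]
        simp_rw [Finset.mul_sum, mul_assoc]
      have hT2 : |(∑ i, s.fn (ξ i) * v i) - s.integral| ≤ ε/5 := by
        rw [hS2]
        unfold StepRepr.integral
        rw [← Finset.sum_sub_distrib]
        have hstep : |∑ j, (s.c j * (∑ i, ((s.B j).indicator (fun _ => (1:ℝ)) (ξ i)) * v i)
            - s.c j * brickVol (s.B j))| ≤ ∑ j, |s.c j| * η := by
          refine le_trans (Finset.abs_sum_le_sum_abs _ _) (Finset.sum_le_sum fun j _ => ?_)
          rw [← mul_sub, abs_mul]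
          exact mul_le_mul_of_nonneg_left (hF2 j) (abs_nonneg _)
        refine le_trans hstep ?_
        rw [← Finset.sum_mul]
        have h1 : A * η ≤ A * (ε/(5*(A+1))) := mul_le_mul_of_nonneg_left hηA hA0
        have h2 : A * (ε/(5*(A+1))) ≤ ε/5 := by
          rw [mul_div_assoc', div_le_div_iff₀ (by positivity) (by norm_num)]
          nlinarith
        calc (∑ j, |s.c j|) * η = A * η := by rw [hAdef]
          _ ≤ ε/5 := le_trans h1 h2
      -- bad set bound
      have hbad : (∑ i, (⋃ j, Bb j).indicator (fun _ => (1:ℝ)) (ξ i) * v i) ≤ 2*δ₀ := by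
        have hpt : ∀ i, (⋃ j, Bb j).indicator (fun _ => (1:ℝ)) (ξ i)
            ≤ ∑ j, (Bb j).indicator (fun _ => (1:ℝ)) (ξ i) := by
          intro i
          by_cases hE : ξ i ∈ ⋃ j, Bb j
          · obtain ⟨j, hj⟩ := Set.mem_iUnion.mp hE
            rw [Set.indicator_of_mem hE]
            refine le_trans (le_of_eq (Set.indicator_of_mem hj (fun _ => (1:ℝ))).symm) ?_
            exact Finset.single_le_sum (f := fun j => (Bb j).indicator (fun _ => (1:ℝ)) (ξ i))
              (fun j _ => Set.indicator_nonneg (fun _ _ => zero_le_one) _) (Finset.mem_univ j)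
          · rw [Set.indicator_of_notMem hE]
            exact Finset.sum_nonneg fun j _ => Set.indicator_nonneg (fun _ _ => zero_le_one) _
        have hMbη : (Mb:ℝ) * η ≤ δ₀ := by
          have h1 : (Mb:ℝ) * η ≤ (Mb:ℝ) * (δ₀/(Mb+1)) :=
            mul_le_mul_of_nonneg_left hηM (Nat.cast_nonneg _)
          have h2 : (Mb:ℝ) * (δ₀/(Mb+1)) ≤ δ₀ := by
            rw [mul_div_assoc', div_le_iff₀ (by positivity)]
            nlinarith [Nat.cast_nonneg (α := ℝ) Mb, hδ₀pos]
          linarith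
        calc (∑ i, (⋃ j, Bb j).indicator (fun _ => (1:ℝ)) (ξ i) * v i)
            ≤ ∑ i, (∑ j, (Bb j).indicator (fun _ => (1:ℝ)) (ξ i)) * v i :=
              Finset.sum_le_sum fun i _ => mul_le_mul_of_nonneg_right (hpt i) (hv0 i)
          _ = ∑ j, ∑ i, (Bb j).indicator (fun _ => (1:ℝ)) (ξ i) * v i := by
              simp_rw [Finset.sum_mul]; rw [Finset.sum_comm]
          _ ≤ ∑ j : Fin Mb, (brickVol (Bb j) + η) :=
              Finset.sum_le_sum fun j _ => by
                have := (abs_le.mp (hF3 j)).2; linarith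
          _ = (∑ j, brickVol (Bb j)) + (Mb:ℝ) * η := by
              rw [Finset.sum_add_distrib, Finset.sum_const, Finset.card_univ,
                Fintype.card_fin, nsmul_eq_mul]
          _ ≤ 2*δ₀ := by linarith [hBbvol]
      -- Term 1
      have hT1 : |(∑ i, f (ξ i) * v i) - ∑ i, s.fn (ξ i) * v i| ≤ ε/5 + ε/5 := by
        rw [← Finset.sum_sub_distrib]
        have hptw : ∀ i, |f (ξ i) - s.fn (ξ i)|
            ≤ ε₁ + 2*C * (⋃ j, Bb j).indicator (fun _ => (1:ℝ)) (ξ i) := by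
          intro i
          by_cases hE : ξ i ∈ ⋃ j, Bb j
          · rw [Set.indicator_of_mem hE]
            have h1 : |f (ξ i)| ≤ C := le_trans (hCf _ (hξT i)) hCfC
            have h2 : |s.fn (ξ i)| ≤ C := le_trans (hCg m _ (hξT i)) hCgC
            calc |f (ξ i) - s.fn (ξ i)| ≤ |f (ξ i)| + |s.fn (ξ i)| := abs_sub _ _
              _ ≤ ε₁ + 2*C * 1 := by linarith
          · rw [Set.indicator_of_notMem hE]
            have := hm_unif (ξ i) ⟨hξT i, hE⟩
            rw [Real.dist_eq] at this
            linarith [this]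
        calc |∑ i, (f (ξ i) * v i - s.fn (ξ i) * v i)|
            ≤ ∑ i, |f (ξ i) - s.fn (ξ i)| * v i := by
              refine le_trans (Finset.abs_sum_le_sum_abs _ _) (Finset.sum_le_sum fun i _ => ?_)
              rw [← sub_mul, abs_mul, abs_of_nonneg (hv0 i)]
          _ ≤ ∑ i, (ε₁ + 2*C * (⋃ j, Bb j).indicator (fun _ => (1:ℝ)) (ξ i)) * v i :=
              Finset.sum_le_sum fun i _ => mul_le_mul_of_nonneg_right (hptw i) (hv0 i)
          _ = ε₁ * (∑ i, v i) + 2*C * ∑ i, (⋃ j, Bb j).indicator (fun _ => (1:ℝ)) (ξ i) * v i := by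
              simp_rw [add_mul, Finset.sum_add_distrib, Finset.mul_sum, mul_assoc]
          _ ≤ ε₁ * (V+1) + 2*C * (2*δ₀) := by
              have hle1 : ε₁ * (∑ i, v i) ≤ ε₁ * (V+1) :=
                mul_le_mul_of_nonneg_left hsumv hε₁pos.le
              have hle2 : 2*C * (∑ i, (⋃ j, Bb j).indicator (fun _ => (1:ℝ)) (ξ i) * v i)
                  ≤ 2*C * (2*δ₀) := mul_le_mul_of_nonneg_left hbad (by linarith)
              linarith
          _ ≤ ε/5 + ε/5 := by
              have he1 : ε₁ * (V+1) = ε/5 := by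
                rw [hε₁def]; field_simp
              have he2 : 2*C * (2*δ₀) ≤ ε/5 := by
                have h1 : δ₀ * (20*(C+1)) = ε := by rw [hδ₀def]; field_simp
                nlinarith [mul_nonneg hδ₀pos.le hC0]
              linarith
      have hT3 : |s.integral - I| < ε/5 := by
        rw [← Real.dist_eq]; exact hm_int
      have hfinal : |(∑ i, f (ξ i) * v i) - I| < ε := by
        have habs1 : |(∑ i, f (ξ i) * v i) - I|
            ≤ |(∑ i, f (ξ i) * v i) - ∑ i, s.fn (ξ i) * v i|
              + |(∑ i, s.fn (ξ i) * v i) - s.integral| + |s.integral - I| := by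
          have := abs_sub_le ((∑ i, f (ξ i) * v i)) (∑ i, s.fn (ξ i) * v i) I
          have h2 := abs_sub_le ((∑ i, s.fn (ξ i) * v i)) s.integral I
          linarith
        linarith
      exact hfinal
  exact ⟨⟨I, hKI, hR⟩, fun I' h => (huniq I' h) ▸ hR⟩
end

section
/- There exists a bounded K-integrable function h : [0,1] × [0,4] → ℝ such that for every x ∈ [0,1] the function y ↦ h(x,y) is K-integrable on [0,4], but the function x ↦ ∫₀⁴ h(x,y) dy (with the inner integral a K-integral) is not K-integrable on [0,1]. In particular, the formula reducing a two-dimensional K-integral to successive one-dimensional K-integrals fails for some bounded K-integrable function. -/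
open Set Filter MeasureTheory Topology

namespace KCounter

noncomputable section
open scoped Classical

lemma isBrick_empty {d : ℕ} (hd : 0 < d) : IsBrick (∅ : Set (Fin d → ℝ)) := by
  refine ⟨fun _ => ∅, fun k => ⟨Set.ordConnected_empty, Bornology.isBounded_empty⟩, ?_⟩
  exact (Set.univ_pi_eq_empty (i := ⟨0, hd⟩) rfl).symm

lemma brickVol_empty {d : ℕ} (hd : 0 < d) : brickVol (∅ : Set (Fin d → ℝ)) = 0 := by
  apply Finset.prod_eq_zero (Finset.mem_univ (⟨0, hd⟩ : Fin d))
  simp [Real.sSup_empty, Real.sInf_empty]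

lemma brickVol_pi1 (J : Set ℝ) (hJ : J.Nonempty) :
    brickVol (univ.pi fun _ : Fin 1 => J) = sSup J - sInf J := by
  have hne : (univ.pi fun _ : Fin 1 => J).Nonempty := by
    obtain ⟨a, ha⟩ := hJ
    exact ⟨fun _ => a, fun k _ => ha⟩
  rw [brickVol, Fin.prod_univ_one, Set.eval_image_univ_pi hne]

lemma mem_pi1 {J : Set ℝ} {p : Fin 1 → ℝ} :
    p ∈ (univ.pi fun _ : Fin 1 => J) ↔ p 0 ∈ J := by
  constructor
  · intro hp; exact hp 0 (mem_univ _)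
  · intro hp k _
    have : k = 0 := Subsingleton.elim _ _
    rwa [this]

lemma brickVol_pi2 {A B : Set ℝ} (hA : A.Nonempty) (hB : B.Nonempty) :
    brickVol (univ.pi ![A, B]) = (sSup A - sInf A) * (sSup B - sInf B) := by
  have hne : (univ.pi ![A, B]).Nonempty := by
    obtain ⟨a, ha⟩ := hA
    obtain ⟨b, hb⟩ := hB
    refine ⟨![a, b], fun k _ => ?_⟩
    fin_cases k <;> simpa
  rw [brickVol, Fin.prod_univ_two, Set.eval_image_univ_pi hne, Set.eval_image_univ_pi hne]
  simp

lemma mem_pi2 {A B : Set ℝ} {p : Fin 2 → ℝ} :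
    p ∈ univ.pi ![A, B] ↔ p 0 ∈ A ∧ p 1 ∈ B := by
  constructor
  · intro hp
    exact ⟨by simpa using hp 0 (mem_univ _), by simpa using hp 1 (mem_univ _)⟩
  · rintro ⟨h0, h1⟩ k _
    fin_cases k <;> simpa

lemma isBrick_pi2 {A B : Set ℝ} (hA : A.OrdConnected) (hA' : Bornology.IsBounded A)
    (hB : B.OrdConnected) (hB' : Bornology.IsBounded B) : IsBrick (univ.pi ![A, B]) := by
  refine ⟨![A, B], fun k => ?_, rfl⟩
  fin_cases k <;> simp [hA, hA', hB, hB']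

lemma isBrick_pi1 {J : Set ℝ} (hJ : J.OrdConnected) (hJ' : Bornology.IsBounded J) :
    IsBrick (univ.pi fun _ : Fin 1 => J) :=
  ⟨fun _ => J, fun _ => ⟨hJ, hJ'⟩, rfl⟩

/-- sum of indicators of pairwise disjoint sets is indicator of union -/
lemma sum_indicator_disjoint {ι : Type*} [Fintype ι] {α : Type*} (B : ι → Set α)
    (hd : Pairwise (Function.onFun Disjoint B)) (x : α) :
    (∑ j, (B j).indicator (fun _ => (1:ℝ)) x) = (⋃ j, B j).indicator (fun _ => (1:ℝ)) x := by
  by_cases hx : x ∈ ⋃ j, B j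
  · obtain ⟨j₀, hj₀⟩ : ∃ j, x ∈ B j := by simpa using hx
    rw [Set.indicator_of_mem hx]
    rw [Finset.sum_eq_single j₀]
    · rw [Set.indicator_of_mem hj₀]
    · intro j _ hne
      exact Set.indicator_of_notMem (fun hj => (hd hne).ne_of_mem hj hj₀ rfl) _
    · intro hj; exact absurd (Finset.mem_univ j₀) hj
  · rw [Set.indicator_of_notMem hx]
    apply Finset.sum_eq_zero
    intro j _
    exact Set.indicator_of_notMem (fun hj => hx (Set.mem_iUnion.2 ⟨j, hj⟩)) _

lemma tendstoUniformlyOn_of_eventually_eq {α : Type*} {F : ℕ → α → ℝ} {f : α → ℝ} {s : Set α}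
    (h : ∀ᶠ m in atTop, ∀ x ∈ s, F m x = f x) : TendstoUniformlyOn F f atTop s := by
  rw [Metric.tendstoUniformlyOn_iff]
  intro ε hε
  filter_upwards [h] with m hm x hx
  rw [hm x hx]
  simpa using hε


/-- geometric scale -/
def r (n : ℕ) : ℝ := (2:ℝ)⁻¹ ^ n

lemma r_pos (n : ℕ) : 0 < r n := by unfold r; positivity

lemma r_nonneg (n : ℕ) : 0 ≤ r n := (r_pos n).le

lemma r_mul (m n : ℕ) : r m * r n = r (m + n) := (pow_add _ _ _).symm

lemma r_zero : r 0 = 1 := pow_zero _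

lemma r_antitone {m n : ℕ} (h : m ≤ n) : r n ≤ r m := by
  apply pow_le_pow_of_le_one (by norm_num) (by norm_num) h

lemma r_succ (n : ℕ) : r (n + 1) = r n / 2 := by
  simp only [r, pow_succ]; ring

lemma r_le_one (n : ℕ) : r n ≤ 1 := by simpa [r_zero] using r_antitone (Nat.zero_le n)

lemma r_two : r 2 = 1/4 := by norm_num [r]

lemma four_r (n : ℕ) : 4 * r (n + 4) = r (n + 2) := by
  have h := r_mul (n+2) 2
  rw [r_two] at h
  have : n + 2 + 2 = n + 4 := by omega
  rw [this] at h
  linarith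

def bump (n i m : ℕ) : Set ℝ :=
  Icc ((i:ℝ) * r n + 2 * r (n+m+4)) ((i:ℝ) * r n + 3 * r (n+m+4))

def Kset (n : ℕ) : Set ℝ := Ioc (2 * r n) (2 * r n + r (2*n))

def U (n : ℕ) : Set ℝ := ⋃ (i : ℕ) (_ : i < 2^n) (m : ℕ), bump n i m

def R2 (n i m : ℕ) : Set (Fin 2 → ℝ) := univ.pi ![bump n i m, Kset n]

def W : Set (Fin 2 → ℝ) := ⋃ (n : ℕ) (i : ℕ) (_ : i < 2^n) (m : ℕ), R2 n i m

def hfun : (Fin 2 → ℝ) → ℝ := W.indicator (fun _ => 1)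

def F0 (x : ℝ) : ℝ := ∑' n, if x ∈ U n then r (2*n) else 0

lemma mem_R2 {p : Fin 2 → ℝ} {n i m : ℕ} :
    p ∈ R2 n i m ↔ p 0 ∈ bump n i m ∧ p 1 ∈ Kset n := by
  constructor
  · intro hp
    exact ⟨by simpa using hp 0 (mem_univ _), by simpa using hp 1 (mem_univ _)⟩
  · rintro ⟨h0, h1⟩ k _
    fin_cases k <;> simpa

lemma mem_U {x : ℝ} {n : ℕ} : x ∈ U n ↔ ∃ i m, i < 2^n ∧ x ∈ bump n i m := by
  simp only [U, mem_iUnion]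
  constructor
  · rintro ⟨i, hi, m, hb⟩; exact ⟨i, m, hi, hb⟩
  · rintro ⟨i, m, hi, hb⟩; exact ⟨i, hi, m, hb⟩

lemma mem_W {p : Fin 2 → ℝ} :
    p ∈ W ↔ ∃ n i m, i < 2^n ∧ p 0 ∈ bump n i m ∧ p 1 ∈ Kset n := by
  simp only [W, mem_iUnion, mem_R2]
  constructor
  · rintro ⟨n, i, hi, m, hb, hk⟩; exact ⟨n, i, m, hi, hb, hk⟩
  · rintro ⟨n, i, m, hi, hb, hk⟩; exact ⟨n, i, hi, m, hb, hk⟩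

lemma mem_W_U {p : Fin 2 → ℝ} :
    p ∈ W ↔ ∃ n, p 0 ∈ U n ∧ p 1 ∈ Kset n := by
  rw [mem_W]
  constructor
  · rintro ⟨n, i, m, hi, hb, hk⟩; exact ⟨n, mem_U.2 ⟨i, m, hi, hb⟩, hk⟩
  · rintro ⟨n, hu, hk⟩
    obtain ⟨i, m, hi, hb⟩ := mem_U.1 hu
    exact ⟨n, i, m, hi, hb, hk⟩

/-- bumps live in a small window right of the gridpoint -/
lemma bump_subset_window (n i m : ℕ) :
    bump n i m ⊆ Ioc ((i:ℝ) * r n) ((i:ℝ) * r n + r (n+2)) := by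
  intro x hx
  obtain ⟨h1, h2⟩ := hx
  constructor
  · nlinarith [r_pos (n+m+4)]
  · have h3 : 3 * r (n+m+4) ≤ 3 * r (n+4) := by
      have := r_antitone (show n+4 ≤ n+m+4 by omega); linarith
    have h4 := four_r n
    nlinarith [r_pos (n+4)]

lemma Kset_subset (n : ℕ) : Kset n ⊆ Ioc 0 (3 * r n) := by
  intro y hy
  obtain ⟨h1, h2⟩ := hy
  have h3 : r (2*n) ≤ r n := r_antitone (by omega)
  constructor
  · nlinarith [r_pos n]
  · linarith

lemma Kset_disjoint {n n' : ℕ} (h : n ≠ n') : Disjoint (Kset n) (Kset n') := by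
  wlog hlt : n < n' generalizing n n'
  · exact (this h.symm (by omega)).symm
  apply Set.disjoint_left.2
  rintro y ⟨h1, _⟩ ⟨_, h4⟩
  have h5 : r (2*n') ≤ r n' := r_antitone (by omega)
  have h6 : r n' ≤ r (n+1) := r_antitone (by omega)
  have h7 : r (n+1) = r n / 2 := r_succ n
  linarith

lemma bump_disjoint_same {n i m m' : ℕ} (h : m ≠ m') :
    Disjoint (bump n i m) (bump n i m') := by
  wlog hlt : m < m' generalizing m m'
  · exact (this h.symm (by omega)).symm
  apply Set.disjoint_left.2
  rintro x ⟨h1, _⟩ ⟨_, h4⟩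
  have h5 : r (n+m'+4) ≤ r (n+m+5) := r_antitone (by omega)
  have h7 : r (n+m+5) = r (n+m+4) / 2 := r_succ (n+m+4)
  have := r_pos (n+m+4)
  linarith

lemma bump_disjoint_i {n i i' m m' : ℕ} (hi : i < 2^n) (hi' : i' < 2^n) (h : i ≠ i') :
    Disjoint (bump n i m) (bump n i' m') := by
  wlog hlt : i < i' generalizing i i' m m'
  · exact (this hi' hi h.symm (by omega)).symm
  apply Set.disjoint_left.2
  intro x hx hx'
  have w1 := bump_subset_window n i m hx
  have w2 := bump_subset_window n i' m' hx'
  have hii : (i:ℝ) + 1 ≤ (i':ℝ) := by exact_mod_cast hlt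
  have h3 : r (n + 2) < r n := by
    have h5 : r (n+1) ≤ r n := r_antitone (by omega)
    have := r_pos n
    calc r (n+2) = r (n+1) / 2 := by rw [show n+2 = n+1+1 by omega, r_succ]
    _ ≤ r n / 2 := by linarith
    _ < r n := by linarith
  obtain ⟨a1, a2⟩ := w1
  obtain ⟨b1, b2⟩ := w2
  nlinarith [r_pos n]

lemma R2_disjoint {n i m n' i' m' : ℕ} (hi : i < 2^n) (hi' : i' < 2^n')
    (hne : (n, i, m) ≠ (n', i', m')) : Disjoint (R2 n i m) (R2 n' i' m') := by
  apply Set.disjoint_left.2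
  intro p hp hp'
  rw [mem_R2] at hp hp'
  by_cases hn : n = n'
  · subst hn
    by_cases hii : i = i'
    · subst hii
      have hmm : m ≠ m' := by simpa using hne
      exact (bump_disjoint_same hmm).ne_of_mem hp.1 hp'.1 rfl
    · exact (bump_disjoint_i hi hi' hii).ne_of_mem hp.1 hp'.1 rfl
  · exact (Kset_disjoint hn).ne_of_mem hp.2 hp'.2 rfl


/-! ### The slice functions -/

def T1 : Set (Fin 1 → ℝ) := Set.Icc (0 : Fin 1 → ℝ) (fun _ => 4)

def K1 (n : ℕ) : Set (Fin 1 → ℝ) := univ.pi fun _ : Fin 1 => Kset n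

lemma mem_T1 {p : Fin 1 → ℝ} : p ∈ T1 ↔ 0 ≤ p 0 ∧ p 0 ≤ 4 := by
  constructor
  · rintro ⟨h1, h2⟩; exact ⟨h1 0, h2 0⟩
  · rintro ⟨h1, h2⟩
    constructor <;> intro k <;>
      [ (have hk : k = 0 := Subsingleton.elim _ _; rw [hk]; exact h1);
        (have hk : k = 0 := Subsingleton.elim _ _; rw [hk]; exact h2)]

lemma Kset_nonempty (n : ℕ) : (Kset n).Nonempty := by
  refine ⟨2 * r n + r (2*n), ?_, le_refl _⟩
  have := r_pos (2*n); linarith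

lemma Kset_lt (n : ℕ) : 2 * r n < 2 * r n + r (2*n) := by have := r_pos (2*n); linarith

lemma Kset_subset_Icc04 (n : ℕ) : Kset n ⊆ Icc 0 4 := by
  intro y hy
  obtain ⟨h1, h2⟩ := Kset_subset n hy
  have h3 : r n ≤ 1 := r_le_one n
  exact ⟨h1.le, by linarith⟩

lemma K1_subset_T1 (n : ℕ) : K1 n ⊆ T1 := by
  intro p hp
  rw [K1, mem_pi1] at hp
  exact mem_T1.2 (Kset_subset_Icc04 n hp)

lemma isBrick_K1 (n : ℕ) : IsBrick (K1 n) :=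
  isBrick_pi1 Set.ordConnected_Ioc (Metric.isBounded_Ioc _ _)

lemma brickVol_K1 (n : ℕ) : brickVol (K1 n) = r (2*n) := by
  rw [K1, brickVol_pi1 _ (Kset_nonempty n), Kset]
  rw [csSup_Ioc (Kset_lt n), csInf_Ioc (Kset_lt n)]
  ring

lemma K1_disjoint {n n' : ℕ} (h : n ≠ n') : Disjoint (K1 n) (K1 n') := by
  apply Set.disjoint_left.2
  intro p hp hp'
  rw [K1, mem_pi1] at hp hp'
  exact (Kset_disjoint h).ne_of_mem hp hp' rfl

/-- the y-section of W over x -/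
def A (x : ℝ) : Set ℝ := ⋃ n, (if x ∈ U n then Kset n else ∅)

lemma mem_A {x y : ℝ} : y ∈ A x ↔ ∃ n, x ∈ U n ∧ y ∈ Kset n := by
  simp only [A, mem_iUnion]
  constructor
  · rintro ⟨n, hn⟩
    by_cases hx : x ∈ U n
    · rw [if_pos hx] at hn; exact ⟨n, hx, hn⟩
    · rw [if_neg hx] at hn; exact absurd hn (notMem_empty _)
  · rintro ⟨n, hx, hy⟩
    exact ⟨n, by rw [if_pos hx]; exact hy⟩

lemma hfun_slice (x : ℝ) (y : Fin 1 → ℝ) :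
    hfun ![x, y 0] = (A x).indicator (fun _ => (1:ℝ)) (y 0) := by
  rw [hfun]
  by_cases hy : y 0 ∈ A x
  · rw [Set.indicator_of_mem hy]
    obtain ⟨n, hx, hk⟩ := mem_A.1 hy
    have : (![x, y 0] : Fin 2 → ℝ) ∈ W := by
      rw [mem_W_U]
      exact ⟨n, by simpa using hx, by simpa using hk⟩
    rw [Set.indicator_of_mem this]
  · rw [Set.indicator_of_notMem hy]
    have : (![x, y 0] : Fin 2 → ℝ) ∉ W := by
      intro hw
      obtain ⟨n, hx, hk⟩ := mem_W_U.1 hw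
      exact hy (mem_A.2 ⟨n, by simpa using hx, by simpa using hk⟩)
    rw [Set.indicator_of_notMem this]

lemma F0_summable (x : ℝ) : Summable (fun n => if x ∈ U n then r (2*n) else 0) := by
  apply Summable.of_nonneg_of_le (fun n => ?_) (fun n => ?_)
    (summable_geometric_of_lt_one (by norm_num : (0:ℝ) ≤ 1/4) (by norm_num : (1/4:ℝ) < 1))
  · split
    · exact r_nonneg _
    · exact le_refl _
  · have h4 : r (2*n) = (1/4:ℝ)^n := by
      rw [r, pow_mul]; norm_num
    split
    · exact le_of_eq h4
    · positivity

/-- step approximants for the slice over x -/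
def sliceStep (x : ℝ) (m : ℕ) : StepRepr T1 where
  M := m + 1
  c := fun n => if x ∈ U (n : ℕ) then 1 else 0
  B := fun n => K1 (n : ℕ)
  isBrick := fun n => isBrick_K1 _
  subset := fun n => K1_subset_T1 _

lemma sliceStep_fn (x : ℝ) (m : ℕ) (y : Fin 1 → ℝ) :
    (sliceStep x m).fn y =
      (⋃ n : Fin (m+1), (if x ∈ U (n:ℕ) then K1 (n:ℕ) else ∅)).indicator
        (fun _ => (1:ℝ)) y := by
  rw [StepRepr.fn]
  rw [← sum_indicator_disjoint _ ?_ y]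
  · apply Finset.sum_congr rfl
    intro n _
    by_cases hx : x ∈ U (n : ℕ)
    · simp [sliceStep, if_pos hx]
    · simp [sliceStep, if_neg hx]
  · intro n n' hne
    have hnn : (n : ℕ) ≠ (n' : ℕ) := fun hc => hne (Fin.ext hc)
    unfold Function.onFun
    by_cases hx : x ∈ U (n : ℕ) <;> by_cases hx' : x ∈ U (n' : ℕ) <;>
      simp only [hx, hx', if_true, if_false]
    · exact K1_disjoint hnn
    all_goals simp

lemma sliceStep_integral (x : ℝ) (m : ℕ) :
    (sliceStep x m).integral = ∑ n ∈ Finset.range (m+1), (if x ∈ U n then r (2*n) else 0) := by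
  rw [StepRepr.integral, ← Fin.sum_univ_eq_sum_range]
  apply Finset.sum_congr rfl
  intro n _
  show (if x ∈ U (n:ℕ) then (1:ℝ) else 0) * brickVol (K1 (n:ℕ)) = _
  rw [brickVol_K1]
  by_cases hx : x ∈ U (n:ℕ) <;> simp [hx]

lemma exists_rN {δ : ℝ} (hδ : 0 < δ) : ∃ N : ℕ, 4 * r N < δ := by
  obtain ⟨N, hN⟩ := exists_pow_lt_of_lt_one (show (0:ℝ) < δ/4 by linarith)
    (show (2:ℝ)⁻¹ < 1 by norm_num)
  exact ⟨N, by rw [r]; linarith⟩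

lemma slice_hasK (x : ℝ) : HasKIntegral T1 (fun y => hfun ![x, y 0]) (F0 x) := by
  refine ⟨sliceStep x, ⟨⟨1, fun m y _ => ?_⟩, fun δ hδ => ?_⟩, ?_⟩
  · show |(sliceStep x m).fn y| ≤ 1
    rw [sliceStep_fn]
    rw [Set.indicator_apply]
    split <;> norm_num
  · obtain ⟨N, hN⟩ := exists_rN hδ
    refine ⟨1, fun _ => univ.pi fun _ : Fin 1 => Icc (0:ℝ) (4 * r N), ?_, ?_, ?_⟩
    · intro _
      constructor
      · exact isBrick_pi1 Set.ordConnected_Icc (Metric.isBounded_Icc _ _)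
      · intro p hp
        rw [mem_pi1] at hp
        refine mem_T1.2 ⟨hp.1, hp.2.trans ?_⟩
        have := r_le_one N; linarith
    · have hpos : (0:ℝ) ≤ 4 * r N := by have := r_pos N; linarith
      have hb : brickVol (univ.pi fun _ : Fin 1 => Icc (0:ℝ) (4 * r N)) = 4 * r N := by
        rw [brickVol_pi1 _ (nonempty_Icc.2 hpos)]
        rw [csSup_Icc hpos, csInf_Icc hpos]
        ring
      rw [Fin.sum_univ_one, hb]
      exact hN
    · apply tendstoUniformlyOn_of_eventually_eq
      filter_upwards [eventually_ge_atTop N] with m hm y hy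
      obtain ⟨hyT, hyC⟩ := hy
      have hy0 : 0 ≤ y 0 ∧ y 0 ≤ 4 := mem_T1.1 hyT
      have hygt : 4 * r N < y 0 := by
        by_contra hc
        push_neg at hc
        exact hyC (mem_iUnion.2 ⟨0, mem_pi1.2 ⟨hy0.1, hc⟩⟩)
      rw [sliceStep_fn, hfun_slice]
      by_cases hA : y 0 ∈ A x
      · obtain ⟨n₀, hxU, hyK⟩ := mem_A.1 hA
        have hn₀ : n₀ ≤ m := by
          by_contra hc
          push_neg at hc
          have h1 := (Kset_subset n₀ hyK).2
          have h2 : r n₀ ≤ r N := r_antitone (by omega)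
          linarith
        rw [Set.indicator_of_mem hA]
        have : y ∈ ⋃ n : Fin (m+1), (if x ∈ U (n:ℕ) then K1 (n:ℕ) else ∅) := by
          refine mem_iUnion.2 ⟨⟨n₀, by omega⟩, ?_⟩
          rw [if_pos hxU]
          exact mem_pi1.2 hyK
        rw [Set.indicator_of_mem this]
      · rw [Set.indicator_of_notMem hA]
        have : y ∉ ⋃ n : Fin (m+1), (if x ∈ U (n:ℕ) then K1 (n:ℕ) else ∅) := by
          intro hc
          obtain ⟨n, hn⟩ := mem_iUnion.1 hc
          by_cases hx : x ∈ U (n:ℕ)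
          · rw [if_pos hx] at hn
            exact hA (mem_A.2 ⟨n, hx, mem_pi1.1 hn⟩)
          · rw [if_neg hx] at hn
            exact absurd hn (notMem_empty _)
        rw [Set.indicator_of_notMem this]
  · have h := (F0_summable x).hasSum.tendsto_sum_nat
    have h2 := h.comp (tendsto_add_atTop_nat 1)
    apply h2.congr
    intro m
    exact (sliceStep_integral x m).symm

/-! ### Uniqueness of the 1D K-integral via Lebesgue theory -/

lemma interval_volume {J : Set ℝ} (h1 : J.OrdConnected) (h2 : Bornology.IsBounded J) :
    volume J = ENNReal.ofReal (sSup J - sInf J) := by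
  rcases J.eq_empty_or_nonempty with rfl | hne
  · simp [Real.sSup_empty, Real.sInf_empty]
  · have hba : BddAbove J := h2.bddAbove
    have hbb : BddBelow J := h2.bddBelow
    have hsub : J ⊆ Icc (sInf J) (sSup J) := fun z hz => ⟨csInf_le hbb hz, le_csSup hba hz⟩
    have hsub2 : Ioo (sInf J) (sSup J) ⊆ J := by
      intro z hz
      obtain ⟨u, hu, huz⟩ := exists_lt_of_csInf_lt hne hz.1
      obtain ⟨w, hw, hzw⟩ := exists_lt_of_lt_csSup hne hz.2
      exact h1.out hu hw ⟨huz.le, hzw.le⟩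
    apply le_antisymm
    · calc volume J ≤ volume (Icc (sInf J) (sSup J)) := measure_mono hsub
        _ = ENNReal.ofReal (sSup J - sInf J) := Real.volume_Icc
    · calc ENNReal.ofReal (sSup J - sInf J) = volume (Ioo (sInf J) (sSup J)) :=
          Real.volume_Ioo.symm
        _ ≤ volume J := measure_mono hsub2

lemma brick1_measurable {S : Set (Fin 1 → ℝ)} (hS : IsBrick S) : MeasurableSet S := by
  obtain ⟨I, hI, rfl⟩ := hS
  exact MeasurableSet.univ_pi fun k => (hI k).1.measurableSet

lemma brick1_volume {S : Set (Fin 1 → ℝ)} (hS : IsBrick S) :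
    volume S = ENNReal.ofReal (brickVol S) ∧ 0 ≤ brickVol S := by
  obtain ⟨I, hI, rfl⟩ := hS
  have hvol : volume (univ.pi I) = volume (I 0) := by
    rw [volume_pi_pi I, Fin.prod_univ_one]
  rcases (univ.pi I).eq_empty_or_nonempty with he | hne
  · have hI0 : I 0 = ∅ := by
      rcases (I 0).eq_empty_or_nonempty with h | h
      · exact h
      · exfalso
        obtain ⟨a, ha⟩ := h
        have hp : (fun _ : Fin 1 => a) ∈ univ.pi I := by
          intro k _
          have hk : k = (0 : Fin 1) := Subsingleton.elim k 0
          rw [hk]; exact ha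
        rw [he] at hp
        exact hp
    rw [he]
    have hb0 : brickVol (∅ : Set (Fin 1 → ℝ)) = 0 := brickVol_empty (by norm_num)
    rw [hb0]
    simp
  · have himg : (fun x => x 0) '' (univ.pi I) = I 0 := Set.eval_image_univ_pi hne
    have hbv : brickVol (univ.pi I) = sSup (I 0) - sInf (I 0) := by
      rw [brickVol, Fin.prod_univ_one, himg]
    have hJne : (I 0).Nonempty := by rw [← himg]; exact hne.image _
    constructor
    · rw [hbv, hvol, interval_volume (hI 0).1 (hI 0).2]
    · rw [hbv]
      obtain ⟨a, ha⟩ := hJne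
      have := csInf_le (hI 0).2.bddBelow ha
      have := le_csSup (hI 0).2.bddAbove ha
      linarith

lemma brick1_volume_lt_top {S : Set (Fin 1 → ℝ)} (hS : IsBrick S) : volume S < ⊤ := by
  rw [(brick1_volume hS).1]; exact ENNReal.ofReal_lt_top

lemma step_fn_integrable (g : StepRepr T1) : Integrable g.fn := by
  apply integrable_finset_sum
  intro j _
  have : (fun x => g.c j * (g.B j).indicator (fun _ => (1:ℝ)) x)
      = (g.B j).indicator (fun _ => g.c j) := by
    ext x
    rw [Set.indicator_apply, Set.indicator_apply]
    split <;> simp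
  rw [this]
  rw [integrable_indicator_iff (brick1_measurable (g.isBrick j))]
  exact integrableOn_const (brick1_volume_lt_top (g.isBrick j)).ne

lemma step_setIntegral (g : StepRepr T1) : (∫ y in T1, g.fn y) = g.integral := by
  simp only [StepRepr.fn]
  rw [integral_finset_sum]
  · rw [StepRepr.integral]
    apply Finset.sum_congr rfl
    intro j _
    rw [integral_const_mul]
    rw [setIntegral_indicator (brick1_measurable (g.isBrick j))]
    have h1 : T1 ∩ g.B j = g.B j := Set.inter_eq_self_of_subset_right (g.subset j)
    rw [h1, setIntegral_const, smul_eq_mul, mul_one, measureReal_def]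
    rw [(brick1_volume (g.isBrick j)).1, ENNReal.toReal_ofReal (brick1_volume (g.isBrick j)).2]
  · intro j _
    have : (fun x => g.c j * (g.B j).indicator (fun _ => (1:ℝ)) x)
        = (g.B j).indicator (fun _ => g.c j) := by
      ext x
      rw [Set.indicator_apply, Set.indicator_apply]
      split <;> simp
    rw [this]
    have hint : Integrable ((g.B j).indicator fun _ => g.c j) := by
      rw [integrable_indicator_iff (brick1_measurable (g.isBrick j))]
      exact integrableOn_const (brick1_volume_lt_top (g.isBrick j)).ne
    exact hint.integrableOn

lemma T1_volume : volume T1 = ENNReal.ofReal 4 := by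
  rw [T1, Real.volume_Icc_pi, Fin.prod_univ_one]
  norm_num

lemma f_integrableOn {f : (Fin 1 → ℝ) → ℝ} (hmeas : Measurable f) (hbd : ∀ y, |f y| ≤ 1) :
    IntegrableOn f T1 := by
  apply Integrable.mono' (g := fun _ => (1:ℝ))
  · exact integrableOn_const (by rw [T1_volume]; exact ENNReal.ofReal_ne_top)
  · exact hmeas.aestronglyMeasurable.restrict
  · exact Filter.Eventually.of_forall (fun y => by simpa using hbd y)

lemma hasK_unique {f : (Fin 1 → ℝ) → ℝ} {I : ℝ} (hmeas : Measurable f) (hbd : ∀ y, |f y| ≤ 1)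
    (hK : HasKIntegral T1 f I) : I = ∫ y in T1, f y := by
  obtain ⟨g, ⟨⟨C, hC⟩, hδ⟩, hint⟩ := hK
  have hC0 : 0 ≤ C := le_trans (abs_nonneg _) (hC 0 (fun _ => 0)
    (by rw [mem_T1]; norm_num))
  have hfint : IntegrableOn f T1 := f_integrableOn hmeas hbd
  have hmeasT1 : MeasurableSet T1 := measurableSet_Icc
  -- the step integrals converge to the Lebesgue integral of f
  have key : Tendsto (fun m => (g m).integral) atTop (nhds (∫ y in T1, f y)) := by
    rw [Metric.tendsto_atTop]
    intro ε hε
    obtain ⟨M₀, Bf, hBf, hvol, hunif⟩ := hδ (ε / (2 * (C + 2))) (by positivity)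
    set D := ⋃ j, Bf j with hD
    have hDmeas : MeasurableSet D := MeasurableSet.iUnion fun j => brick1_measurable (hBf j).1
    have hDvol : volume D ≤ ENNReal.ofReal (ε / (2 * (C + 2))) := by
      calc volume D ≤ ∑ j, volume (Bf j) := measure_iUnion_fintype_le _ _
        _ = ∑ j, ENNReal.ofReal (brickVol (Bf j)) := by
            apply Finset.sum_congr rfl
            intro j _
            exact (brick1_volume (hBf j).1).1
        _ = ENNReal.ofReal (∑ j, brickVol (Bf j)) := by
            rw [ENNReal.ofReal_sum_of_nonneg]
            intro j _
            exact (brick1_volume (hBf j).1).2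
        _ ≤ ENNReal.ofReal (ε / (2 * (C + 2))) := ENNReal.ofReal_le_ofReal hvol.le
    rw [Metric.tendstoUniformlyOn_iff] at hunif
    obtain ⟨N, hN⟩ := eventually_atTop.1 (hunif (ε / 16) (by positivity))
    refine ⟨N, fun m hm => ?_⟩
    have hφint : IntegrableOn (g m).fn T1 := (step_fn_integrable (g m)).integrableOn
    have hsplitφ := integral_inter_add_diff (μ := volume) (s := T1) (f := (g m).fn) hDmeas hφint
    have hsplitf := integral_inter_add_diff (μ := volume) (s := T1) (f := f) hDmeas hfint
    rw [Real.dist_eq, ← step_setIntegral (g m), ← hsplitφ, ← hsplitf]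
    have hfin1 : volume (T1 ∩ D) < ⊤ :=
      lt_of_le_of_lt ((measure_mono inter_subset_right).trans hDvol) ENNReal.ofReal_lt_top
    have hfin2 : volume (T1 \ D) < ⊤ :=
      lt_of_le_of_lt ((measure_mono diff_subset).trans (le_of_eq T1_volume))
        ENNReal.ofReal_lt_top
    set t := (volume (T1 ∩ D)).toReal with ht
    have ht0 : 0 ≤ t := ENNReal.toReal_nonneg
    have htδ : t ≤ ε / (2 * (C + 2)) := by
      apply ENNReal.toReal_le_of_le_ofReal (by positivity)
      exact (measure_mono inter_subset_right).trans hDvol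
    have hvolC : (volume (T1 \ D)).toReal ≤ 4 := by
      apply ENNReal.toReal_le_of_le_ofReal (by norm_num)
      exact (measure_mono diff_subset).trans (le_of_eq T1_volume)
    have hb1 : |∫ y in T1 ∩ D, (g m).fn y| ≤ C * t := by
      have hh := norm_setIntegral_le_of_norm_le_const (μ := volume) hfin1
        (f := (g m).fn) (C := C)
        (fun x hx => by rw [Real.norm_eq_abs]; exact hC m x hx.1)
      rwa [Real.norm_eq_abs] at hh
    have hb2 : |∫ y in T1 ∩ D, f y| ≤ 1 * t := by
      have hh := norm_setIntegral_le_of_norm_le_const (μ := volume) hfin1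
        (f := f) (C := 1)
        (fun x hx => by rw [Real.norm_eq_abs]; exact hbd x)
      rwa [Real.norm_eq_abs] at hh
    have hb3 : |(∫ y in T1 \ D, (g m).fn y) - ∫ y in T1 \ D, f y| ≤ ε / 16 * 4 := by
      rw [← integral_sub (hφint.mono_set diff_subset) (hfint.mono_set diff_subset)]
      have hh := norm_setIntegral_le_of_norm_le_const (μ := volume) hfin2
        (f := fun y => (g m).fn y - f y) (C := ε/16)
        (fun x hx => by
          rw [Real.norm_eq_abs, abs_sub_comm, ← Real.dist_eq]
          exact (hN m hm x hx).le)
      rw [Real.norm_eq_abs] at hh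
      calc |∫ y in T1 \ D, ((g m).fn y - f y)| ≤ ε/16 * (volume (T1 \ D)).toReal := hh
        _ ≤ ε/16 * 4 := by
            apply mul_le_mul_of_nonneg_left hvolC (by positivity)
    set A1 := ∫ y in T1 ∩ D, (g m).fn y
    set A2 := ∫ y in T1 \ D, (g m).fn y
    set B1 := ∫ y in T1 ∩ D, f y
    set B2 := ∫ y in T1 \ D, f y
    have hsum : |(A1 + A2) - (B1 + B2)| ≤ |A1| + |B1| + |A2 - B2| := by
      have he : (A1 + A2) - (B1 + B2) = A1 + -B1 + (A2 - B2) := by ring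
      rw [he]
      calc |A1 + -B1 + (A2 - B2)| ≤ |A1 + -B1| + |A2 - B2| := abs_add_le _ _
        _ ≤ |A1| + |-B1| + |A2 - B2| := by
            have := abs_add_le A1 (-B1); linarith
        _ = |A1| + |B1| + |A2 - B2| := by rw [abs_neg]
    have hu : (ε / (2 * (C + 2))) * (2 * (C + 2)) = ε := div_mul_cancel₀ _ (by positivity)
    have hu0 : 0 ≤ ε / (2 * (C + 2)) := by positivity
    have h5 : (C + 1) * t ≤ (C + 1) * (ε / (2 * (C + 2))) :=
      mul_le_mul_of_nonneg_left htδ (by linarith)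
    nlinarith [hsum, hb1, hb2, hb3, h5, hu, hu0, hC0, hε]
  exact tendsto_nhds_unique hint key

/-! ### The Lebesgue integral of each slice equals `F0 x` -/

def D1 (x : ℝ) (n : ℕ) : Set (Fin 1 → ℝ) := if x ∈ U n then K1 n else ∅

lemma D1_measurable (x : ℝ) (n : ℕ) : MeasurableSet (D1 x n) := by
  rw [D1]; split
  · exact brick1_measurable (isBrick_K1 n)
  · exact MeasurableSet.empty

lemma D1_disjoint (x : ℝ) : Pairwise (Function.onFun Disjoint (D1 x)) := by
  intro n n' hne
  unfold Function.onFun D1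
  split <;> split
  · exact K1_disjoint hne
  all_goals simp

lemma D1_volume (x : ℝ) (n : ℕ) :
    volume (D1 x n) = ENNReal.ofReal (if x ∈ U n then r (2*n) else 0) := by
  rw [D1]
  by_cases hx : x ∈ U n
  · rw [if_pos hx, if_pos hx, (brick1_volume (isBrick_K1 n)).1, brickVol_K1]
  · rw [if_neg hx, if_neg hx]
    simp

lemma slice_eq_indicator (x : ℝ) :
    (fun y : Fin 1 → ℝ => hfun ![x, y 0]) = (⋃ n, D1 x n).indicator (fun _ => (1:ℝ)) := by
  ext y
  rw [hfun_slice]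
  have hmem : y ∈ (⋃ n, D1 x n) ↔ y 0 ∈ A x := by
    simp only [mem_iUnion, D1, mem_A]
    constructor
    · rintro ⟨n, hn⟩
      by_cases hx : x ∈ U n
      · rw [if_pos hx] at hn; exact ⟨n, hx, mem_pi1.1 hn⟩
      · rw [if_neg hx] at hn; exact absurd hn (notMem_empty _)
    · rintro ⟨n, hx, hy⟩
      exact ⟨n, by rw [if_pos hx]; exact mem_pi1.2 hy⟩
  by_cases hy : y 0 ∈ A x
  · rw [Set.indicator_of_mem hy, Set.indicator_of_mem (hmem.2 hy)]
  · rw [Set.indicator_of_notMem hy, Set.indicator_of_notMem (fun hc => hy (hmem.1 hc))]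

lemma slice_measurable (x : ℝ) : Measurable (fun y : Fin 1 → ℝ => hfun ![x, y 0]) := by
  rw [slice_eq_indicator]
  exact (measurable_const.indicator (MeasurableSet.iUnion (D1_measurable x)))

lemma slice_bounded (x : ℝ) (y : Fin 1 → ℝ) : |hfun ![x, y 0]| ≤ 1 := by
  have := congrFun (slice_eq_indicator x) y
  rw [this, Set.indicator_apply]
  split <;> norm_num

lemma slice_setIntegral (x : ℝ) : (∫ y in T1, hfun ![x, y 0]) = F0 x := by
  have hsub : (⋃ n, D1 x n) ⊆ T1 := by
    apply Set.iUnion_subset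
    intro n
    rw [D1]; split
    · exact K1_subset_T1 n
    · exact Set.empty_subset _
  have hmeasU : MeasurableSet (⋃ n, D1 x n) := MeasurableSet.iUnion (D1_measurable x)
  calc (∫ y in T1, hfun ![x, y 0])
      = ∫ y in T1, (⋃ n, D1 x n).indicator (fun _ => (1:ℝ)) y := by
        rw [slice_eq_indicator]
    _ = ∫ y in T1 ∩ (⋃ n, D1 x n), (1:ℝ) := setIntegral_indicator hmeasU
    _ = (volume (⋃ n, D1 x n)).toReal := by
        rw [Set.inter_eq_self_of_subset_right hsub, setIntegral_const, smul_eq_mul, mul_one, measureReal_def]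
    _ = F0 x := by
        rw [measure_iUnion (D1_disjoint x) (D1_measurable x)]
        have h1 : ∀ n, volume (D1 x n) ≠ ⊤ := by
          intro n; rw [D1_volume]; exact ENNReal.ofReal_ne_top
        rw [ENNReal.tsum_toReal_eq h1]
        rw [F0]
        apply tsum_congr
        intro n
        rw [D1_volume, ENNReal.toReal_ofReal]
        split
        · exact r_nonneg _
        · exact le_refl _

lemma slice_value_unique (x : ℝ) {I : ℝ}
    (hI : HasKIntegral T1 (fun y => hfun ![x, y 0]) I) : I = F0 x := by
  rw [hasK_unique (slice_measurable x) (slice_bounded x) hI, slice_setIntegral]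

/-! ### 2D K-integrability of hfun -/

def T2 : Set (Fin 2 → ℝ) := Set.Icc (0 : Fin 2 → ℝ) ![1, 4]

lemma mem_T2 {p : Fin 2 → ℝ} : p ∈ T2 ↔ (0 ≤ p 0 ∧ p 0 ≤ 1) ∧ (0 ≤ p 1 ∧ p 1 ≤ 4) := by
  constructor
  · rintro ⟨h1, h2⟩
    exact ⟨⟨h1 0, by simpa using h2 0⟩, ⟨h1 1, by simpa using h2 1⟩⟩
  · rintro ⟨⟨h1, h2⟩, ⟨h3, h4⟩⟩
    constructor <;> intro k <;> fin_cases k <;> simpa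

lemma pow_mul_r (n : ℕ) : (2:ℝ)^n * r n = 1 := by
  rw [r, ← mul_pow]; norm_num

lemma bump_nonempty (n i m : ℕ) : (bump n i m).Nonempty := by
  apply nonempty_Icc.2
  have := r_pos (n+m+4); linarith

lemma bump_lower (n i m : ℕ) : (i:ℝ) * r n ≤ (i:ℝ) * r n + 2 * r (n+m+4) := by
  have := r_pos (n+m+4); linarith

lemma three_r_le (n i m : ℕ) : 3 * r (n+m+4) ≤ r n := by
  have h1 : r (n+m+4) ≤ r (n+4) := r_antitone (by omega)
  have h2 := four_r n
  have h3 : r (n+2) ≤ r n := r_antitone (by omega)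
  have h4 := r_pos (n+4)
  linarith

lemma bump_subset_Icc01 {n i : ℕ} (hi : i < 2^n) (m : ℕ) : bump n i m ⊆ Icc 0 1 := by
  intro z hz
  obtain ⟨h1, h2⟩ := hz
  have hi' : (i:ℝ) ≤ (2:ℝ)^n - 1 := by
    have : (i:ℝ) + 1 ≤ ((2^n : ℕ) : ℝ) := by exact_mod_cast hi
    push_cast at this
    linarith
  have h0 : (0:ℝ) ≤ (i:ℝ) * r n := mul_nonneg (Nat.cast_nonneg i) (r_nonneg n)
  have hp := r_pos (n+m+4)
  have h3 := three_r_le n i m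
  have h4 := pow_mul_r n
  have h5 := r_nonneg n
  constructor
  · linarith
  · nlinarith

lemma isBrick_R2 (n i m : ℕ) : IsBrick (R2 n i m) :=
  isBrick_pi2 Set.ordConnected_Icc (Metric.isBounded_Icc _ _)
    Set.ordConnected_Ioc (Metric.isBounded_Ioc _ _)

lemma R2_subset_T2 {n i : ℕ} (hi : i < 2^n) (m : ℕ) : R2 n i m ⊆ T2 := by
  intro p hp
  rw [mem_R2] at hp
  have h1 := bump_subset_Icc01 hi m hp.1
  have h2 := Kset_subset_Icc04 n hp.2
  exact mem_T2.2 ⟨⟨h1.1, h1.2⟩, ⟨h2.1, h2.2⟩⟩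

lemma brickVol_R2 (n i m : ℕ) : brickVol (R2 n i m) = r (n+m+4) * r (2*n) := by
  rw [R2, brickVol_pi2 (bump_nonempty n i m) (Kset_nonempty n), bump, Kset]
  rw [csSup_Icc (by have := r_pos (n+m+4); linarith), csInf_Icc (by have := r_pos (n+m+4); linarith)]
  rw [csSup_Ioc (Kset_lt n), csInf_Ioc (Kset_lt n)]
  ring

/-- valid-or-empty rectangle family over plain triples -/
def RB (q : ℕ × ℕ × ℕ) : Set (Fin 2 → ℝ) :=
  if q.2.1 < 2^q.1 then R2 q.1 q.2.1 q.2.2 else ∅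

lemma RB_isBrick (q : ℕ × ℕ × ℕ) : IsBrick (RB q) := by
  rw [RB]; split
  · exact isBrick_R2 _ _ _
  · exact isBrick_empty (by norm_num)

lemma RB_subset_T2 (q : ℕ × ℕ × ℕ) : RB q ⊆ T2 := by
  rw [RB]; split
  · exact R2_subset_T2 (by assumption) _
  · exact Set.empty_subset _

lemma RB_subset_W (q : ℕ × ℕ × ℕ) : RB q ⊆ W := by
  rw [RB]; split
  · rename_i hv
    intro p hp
    exact mem_W.2 ⟨q.1, q.2.1, q.2.2, hv, mem_R2.1 hp⟩
  · exact Set.empty_subset _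

lemma RB_disjoint : Pairwise (Function.onFun Disjoint RB) := by
  intro q q' hne
  unfold Function.onFun RB
  split <;> split
  · rename_i h1 h2
    apply R2_disjoint h1 h2
    intro hc
    exact hne hc
  all_goals simp

/-- generic step representation from a finite family of unit-weight bricks -/
def mkStep {d : ℕ} (T : Set (Fin d → ℝ)) (ι : Type) [Fintype ι] (B : ι → Set (Fin d → ℝ))
    (hb : ∀ q, IsBrick (B q)) (hs : ∀ q, B q ⊆ T) : StepRepr T where
  M := Fintype.card ι
  c := fun _ => 1
  B := fun j => B ((Fintype.equivFin ι).symm j)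
  isBrick := fun j => hb _
  subset := fun j => hs _

lemma mkStep_fn {d : ℕ} (T : Set (Fin d → ℝ)) (ι : Type) [Fintype ι]
    (B : ι → Set (Fin d → ℝ)) (hb : ∀ q, IsBrick (B q)) (hs : ∀ q, B q ⊆ T)
    (hd : Pairwise (Function.onFun Disjoint B)) (y : Fin d → ℝ) :
    (mkStep T ι B hb hs).fn y = (⋃ q, B q).indicator (fun _ => (1:ℝ)) y := by
  rw [StepRepr.fn]
  have h1 : ∀ j : Fin (Fintype.card ι), (1:ℝ) * (B ((Fintype.equivFin ι).symm j)).indicator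
      (fun _ => (1:ℝ)) y = (B ((Fintype.equivFin ι).symm j)).indicator (fun _ => (1:ℝ)) y :=
    fun j => one_mul _
  calc (∑ j, (mkStep T ι B hb hs).c j *
          ((mkStep T ι B hb hs).B j).indicator (fun _ => (1:ℝ)) y)
      = ∑ j : Fin (Fintype.card ι),
          (B ((Fintype.equivFin ι).symm j)).indicator (fun _ => (1:ℝ)) y := by
        apply Finset.sum_congr rfl
        intro j _
        exact h1 j
    _ = (⋃ j : Fin (Fintype.card ι), B ((Fintype.equivFin ι).symm j)).indicator
          (fun _ => (1:ℝ)) y := by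
        apply sum_indicator_disjoint
        intro j j' hne
        exact hd (fun hc => hne ((Fintype.equivFin ι).symm.injective hc))
    _ = (⋃ q, B q).indicator (fun _ => (1:ℝ)) y := by
        rw [(Fintype.equivFin ι).symm.surjective.iUnion_comp B]

lemma mkStep_integral {d : ℕ} (T : Set (Fin d → ℝ)) (ι : Type) [Fintype ι]
    (B : ι → Set (Fin d → ℝ)) (hb : ∀ q, IsBrick (B q)) (hs : ∀ q, B q ⊆ T) :
    (mkStep T ι B hb hs).integral = ∑ q : ι, brickVol (B q) := by
  rw [StepRepr.integral]
  rw [← Equiv.sum_comp (Fintype.equivFin ι).symm (fun q => brickVol (B q))]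
  apply Finset.sum_congr rfl
  intro j _
  exact one_mul _

lemma exists_r_lt {η : ℝ} (hη : 0 < η) : ∃ N : ℕ, r N < η := by
  obtain ⟨N, hN⟩ := exists_pow_lt_of_lt_one hη (show (2:ℝ)⁻¹ < 1 by norm_num)
  exact ⟨N, by rw [r]; exact hN⟩

lemma brickFamily_package {d : ℕ} {T : Set (Fin d → ℝ)} {Ffn : ℕ → (Fin d → ℝ) → ℝ}
    {f : (Fin d → ℝ) → ℝ} {δ : ℝ} (ι : Type) [Fintype ι] (B : ι → Set (Fin d → ℝ))
    (h1 : ∀ q, IsBrick (B q) ∧ B q ⊆ T) (h2 : (∑ q, brickVol (B q)) < δ)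
    (h3 : TendstoUniformlyOn Ffn f atTop (T \ ⋃ q, B q)) :
    ∃ (M : ℕ) (Bf : Fin M → Set (Fin d → ℝ)),
      (∀ j, IsBrick (Bf j) ∧ Bf j ⊆ T) ∧ (∑ j, brickVol (Bf j)) < δ ∧
      TendstoUniformlyOn Ffn f atTop (T \ ⋃ j, Bf j) := by
  refine ⟨Fintype.card ι, fun j => B ((Fintype.equivFin ι).symm j), fun j => h1 _, ?_, ?_⟩
  · rw [Equiv.sum_comp (Fintype.equivFin ι).symm (fun q => brickVol (B q))]
    exact h2
  · rwa [(Fintype.equivFin ι).symm.surjective.iUnion_comp B]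

/-- index type for the step approximants -/
def ι2 (m : ℕ) : Type := Fin (m+1) × Fin (2^(m+1)) × Fin (m+1)

instance (m : ℕ) : Fintype (ι2 m) := by unfold ι2; infer_instance

def emb2 {m : ℕ} (q : ι2 m) : ℕ × ℕ × ℕ := (q.1.val, q.2.1.val, q.2.2.val)

lemma emb2_injective {m : ℕ} : Function.Injective (emb2 (m := m)) := by
  intro a b hc
  rw [emb2, emb2, Prod.mk.injEq, Prod.mk.injEq] at hc
  obtain ⟨e1, e2, e3⟩ := hc
  exact Prod.ext (Fin.ext e1) (Prod.ext (Fin.ext e2) (Fin.ext e3))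

def g2 (m : ℕ) : StepRepr T2 :=
  mkStep T2 (ι2 m) (fun q => RB (emb2 q)) (fun _ => RB_isBrick _) (fun _ => RB_subset_T2 _)

def V2 (m : ℕ) : Set (Fin 2 → ℝ) := ⋃ q : ι2 m, RB (emb2 q)

lemma g2_fn (m : ℕ) (y : Fin 2 → ℝ) :
    (g2 m).fn y = (V2 m).indicator (fun _ => (1:ℝ)) y := by
  have hd : Pairwise (Function.onFun Disjoint (fun q : ι2 m => RB (emb2 q))) := by
    intro q q' hne
    exact RB_disjoint (fun hc => hne (emb2_injective hc))
  rw [g2, mkStep_fn _ _ _ _ _ hd]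
  rfl

lemma V2_subset_W (m : ℕ) : V2 m ⊆ W := Set.iUnion_subset (fun q => RB_subset_W _)

/-- the strips used to cover the deep bumps at levels up to N -/
def strip (M n i : ℕ) : Set (Fin 2 → ℝ) :=
  univ.pi ![Icc ((i:ℝ) * r n) ((i:ℝ) * r n + 3 * r (n+M+5)), Icc (0:ℝ) 4]

def SB (M : ℕ) (q : ℕ × ℕ) : Set (Fin 2 → ℝ) := if q.2 < 2^q.1 then strip M q.1 q.2 else ∅

lemma strip_subset_T2 {n i : ℕ} (hi : i < 2^n) (M : ℕ) : strip M n i ⊆ T2 := by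
  intro p hp
  rw [strip, mem_pi2] at hp
  obtain ⟨⟨h1, h2⟩, h3, h4⟩ := hp
  apply mem_T2.2
  have hi' : (i:ℝ) ≤ (2:ℝ)^n - 1 := by
    have : (i:ℝ) + 1 ≤ ((2^n : ℕ) : ℝ) := by exact_mod_cast hi
    push_cast at this
    linarith
  have h0 : (0:ℝ) ≤ (i:ℝ) * r n := mul_nonneg (Nat.cast_nonneg i) (r_nonneg n)
  have h5 : 3 * r (n+M+5) ≤ r n := by
    have h6 := three_r_le n 0 (M+1)
    rw [show n+(M+1)+4 = n+M+5 from by omega] at h6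
    exact h6
  have h7 := pow_mul_r n
  have h8 := r_nonneg n
  refine ⟨⟨by linarith, by nlinarith⟩, h3, h4⟩

lemma strip_isBrick (M n i : ℕ) : IsBrick (strip M n i) :=
  isBrick_pi2 Set.ordConnected_Icc (Metric.isBounded_Icc _ _)
    Set.ordConnected_Icc (Metric.isBounded_Icc _ _)

lemma strip_brickVol (M n i : ℕ) : brickVol (strip M n i) = 12 * r (n+M+5) := by
  have h1 : (i:ℝ) * r n ≤ (i:ℝ) * r n + 3 * r (n+M+5) := by
    have := r_pos (n+M+5); linarith
  rw [strip, brickVol_pi2 (nonempty_Icc.2 h1) (nonempty_Icc.2 (by norm_num))]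
  rw [csSup_Icc h1, csInf_Icc h1, csSup_Icc (by norm_num : (0:ℝ) ≤ 4),
    csInf_Icc (by norm_num : (0:ℝ) ≤ 4)]
  ring

lemma SB_facts (M : ℕ) (q : ℕ × ℕ) :
    IsBrick (SB M q) ∧ SB M q ⊆ T2 ∧ 0 ≤ brickVol (SB M q) ∧
      brickVol (SB M q) ≤ 12 * r M := by
  rw [SB]
  split
  · rename_i hv
    refine ⟨strip_isBrick _ _ _, strip_subset_T2 hv _, ?_, ?_⟩
    · rw [strip_brickVol]
      have := r_pos (q.1+M+5); linarith
    · rw [strip_brickVol]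
      have : r (q.1+M+5) ≤ r M := r_antitone (by omega)
      linarith
  · refine ⟨isBrick_empty (by norm_num), Set.empty_subset _, ?_, ?_⟩
    · rw [brickVol_empty (by norm_num)]
    · rw [brickVol_empty (by norm_num)]
      have := r_pos M; linarith

def C0 (N : ℕ) : Set (Fin 2 → ℝ) := univ.pi ![Icc (0:ℝ) 1, Icc (0:ℝ) (3 * r N)]

lemma C0_isBrick (N : ℕ) : IsBrick (C0 N) :=
  isBrick_pi2 Set.ordConnected_Icc (Metric.isBounded_Icc _ _)
    Set.ordConnected_Icc (Metric.isBounded_Icc _ _)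

lemma C0_subset_T2 (N : ℕ) : C0 N ⊆ T2 := by
  intro p hp
  rw [C0, mem_pi2] at hp
  obtain ⟨⟨h1, h2⟩, h3, h4⟩ := hp
  have h5 := r_le_one N
  exact mem_T2.2 ⟨⟨h1, h2⟩, h3, by linarith⟩

lemma C0_brickVol (N : ℕ) : brickVol (C0 N) = 3 * r N := by
  have h1 : (0:ℝ) ≤ 3 * r N := by have := r_pos N; linarith
  rw [C0, brickVol_pi2 (nonempty_Icc.2 (by norm_num)) (nonempty_Icc.2 h1)]
  rw [csSup_Icc (by norm_num : (0:ℝ) ≤ 1), csInf_Icc (by norm_num : (0:ℝ) ≤ 1),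
    csSup_Icc h1, csInf_Icc h1]
  ring

lemma hfun_KIntegrable : KIntegrable T2 hfun := by
  refine ⟨fun m => g2 m, ⟨1, fun m y _ => ?_⟩, fun δ hδ => ?_⟩
  · show |(g2 m).fn y| ≤ 1
    rw [g2_fn, Set.indicator_apply]
    split <;> norm_num
  · obtain ⟨N, hN⟩ := exists_r_lt (show 0 < δ/6 by linarith)
    set Kc : ℝ := (((N+1) * 2^(N+1) : ℕ) : ℝ) with hKc
    have hKc0 : 0 ≤ Kc := Nat.cast_nonneg _
    obtain ⟨M, hM⟩ := exists_r_lt (show 0 < δ / (24 * (Kc + 1)) by positivity)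
    -- the covering family
    apply brickFamily_package (Option (Fin (N+1) × Fin (2^(N+1))))
      (fun q => match q with
        | none => C0 N
        | some p => SB M (p.1.val, p.2.val))
    · intro q
      match q with
      | none => exact ⟨C0_isBrick N, C0_subset_T2 N⟩
      | some p => exact ⟨(SB_facts M _).1, (SB_facts M _).2.1⟩
    · rw [Fintype.sum_option]
      have hsum : (∑ p : Fin (N+1) × Fin (2^(N+1)), brickVol (SB M (p.1.val, p.2.val)))
          ≤ Kc * (12 * r M) := by
        have hb := Finset.sum_le_card_nsmul Finset.univ
          (fun p : Fin (N+1) × Fin (2^(N+1)) => brickVol (SB M (p.1.val, p.2.val)))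
          (12 * r M) (fun p _ => (SB_facts M _).2.2.2)
        rw [Finset.card_univ, Fintype.card_prod, Fintype.card_fin, Fintype.card_fin] at hb
        rwa [nsmul_eq_mul] at hb
      have h1 : brickVol (C0 N) < δ/2 := by
        rw [C0_brickVol]; linarith
      have h2 : Kc * (12 * r M) < δ/2 := by
        have h3 : r M * (24 * (Kc+1)) < δ :=
          (lt_div_iff₀ (by positivity)).1 hM
        nlinarith [r_pos M]
      linarith
    · apply tendstoUniformlyOn_of_eventually_eq
      filter_upwards [eventually_ge_atTop (max N M)] with m hm y hy
      have hmN : N ≤ m := le_trans (le_max_left _ _) hm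
      have hmM : M ≤ m := le_trans (le_max_right _ _) hm
      obtain ⟨hyT2, hyC⟩ := hy
      obtain ⟨⟨hx0, hx1⟩, hy0, hy4⟩ := mem_T2.1 hyT2
      have hy1 : 3 * r N < y 1 := by
        by_contra hc
        push_neg at hc
        exact hyC (mem_iUnion.2 ⟨none, mem_pi2.2 ⟨⟨hx0, hx1⟩, hy0, hc⟩⟩)
      have hstrip : ∀ n i : ℕ, n ≤ N → i < 2^n → y ∉ strip M n i := by
        intro n i hn hi hc
        have hi2 : i < 2^(N+1) := lt_of_lt_of_le hi (Nat.pow_le_pow_right (by norm_num) (by omega))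
        refine hyC (mem_iUnion.2 ⟨some (⟨n, by omega⟩, ⟨i, hi2⟩), ?_⟩)
        show y ∈ SB M (n, i)
        rw [SB]
        simpa [hi] using hc
      show (g2 m).fn y = hfun y
      rw [g2_fn]
      simp only [hfun]
      by_cases hw : y ∈ W
      · obtain ⟨n, i, m'', hi, hb, hk⟩ := mem_W.1 hw
        have hnN : n ≤ N := by
          by_contra hc
          push_neg at hc
          have h1 := (Kset_subset n hk).2
          have h2 : r n ≤ r N := r_antitone (by omega)
          linarith
        have hmM' : m'' ≤ M := by
          by_contra hc
          push_neg at hc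
          apply hstrip n i hnN hi
          rw [strip]
          apply mem_pi2.2
          refine ⟨⟨le_trans (bump_lower n i m'') hb.1, ?_⟩, hy0, hy4⟩
          have h6 : r (n+m''+4) ≤ r (n+M+5) := r_antitone (by omega)
          have h7 := hb.2
          rw [bump] at hb
          have h8 := hb.2
          linarith
        have hiv : i < 2^(m+1) := by
          calc i < 2^n := hi
            _ ≤ 2^(m+1) := Nat.pow_le_pow_right (by norm_num) (by omega)
        have hyV : y ∈ V2 m := by
          refine mem_iUnion.2 ⟨(⟨n, by omega⟩, ⟨i, hiv⟩, ⟨m'', by omega⟩), ?_⟩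
          show y ∈ RB (n, i, m'')
          rw [RB]
          simpa [hi] using mem_R2.2 ⟨hb, hk⟩
        rw [Set.indicator_of_mem hyV, Set.indicator_of_mem hw]
      · rw [Set.indicator_of_notMem hw,
          Set.indicator_of_notMem (fun hc => hw (V2_subset_W m hc))]

/-! ### arithmetic for the non-integrability argument -/

lemma r_shift {a b : ℕ} (h : b ≤ a) : r a * (2:ℝ)^(a-b) = r b := by
  have h1 : r a = r b * r (a - b) := by rw [r_mul]; congr 1; omega
  rw [h1, mul_assoc, mul_comm (r (a-b)), pow_mul_r]
  ring

lemma ratio35 (s t : ℕ) : ¬(2 * r t ≤ 7/2 * r s ∧ 7/2 * r s ≤ 3 * r t) := by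
  rintro ⟨h1, h2⟩
  rcases le_total s t with hst | hst
  · have h3 := r_shift hst  -- r t * 2^(t-s) = r s
    have h4 : (1:ℝ) ≤ (2:ℝ)^(t-s) := one_le_pow₀ (by norm_num)
    have h5 := r_pos t
    nlinarith
  · have h3 := r_shift hst  -- r s * 2^(s-t) = r t
    have h5 := r_pos s
    rcases Nat.eq_or_lt_of_le hst with he | hlt
    · have : s - t = 0 := by omega
      rw [this] at h3
      simp at h3
      nlinarith
    · have h6 : (2:ℝ) ≤ (2:ℝ)^(s-t) := by
        calc (2:ℝ) = 2^1 := (pow_one 2).symm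
        _ ≤ 2^(s-t) := pow_le_pow_right₀ (by norm_num) (by omega)
      nlinarith

lemma ratio25 (s t : ℕ) (h1 : 2 * r t ≤ 5/2 * r s) (h2 : 5/2 * r s ≤ 3 * r t) : s = t := by
  by_contra hne
  rcases Nat.lt_or_ge s t with hst | hst
  · have h3 := r_shift hst.le
    have h6 : (2:ℝ) ≤ (2:ℝ)^(t-s) := by
      calc (2:ℝ) = 2^1 := (pow_one 2).symm
      _ ≤ 2^(t-s) := pow_le_pow_right₀ (by norm_num) (by omega)
    have h5 := r_pos t
    nlinarith
  · have hlt : t < s := by omega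
    have h3 := r_shift hlt.le
    have h6 : (2:ℝ) ≤ (2:ℝ)^(s-t) := by
      calc (2:ℝ) = 2^1 := (pow_one 2).symm
      _ ≤ 2^(s-t) := pow_le_pow_right₀ (by norm_num) (by omega)
    have h5 := r_pos s
    nlinarith

/-- distinct gridpoints at levels `n' ≤ n` differ by at least `r n` -/
lemma grid_gap {n n' i i' : ℕ} (hn : n' ≤ n) (hne : (i':ℝ) * r n' ≠ (i:ℝ) * r n) :
    r n ≤ |(i':ℝ) * r n' - (i:ℝ) * r n| := by
  have h1 : (i':ℝ) * r n' = ((i' * 2^(n-n') : ℕ) : ℝ) * r n := by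
    push_cast
    rw [mul_assoc, mul_comm ((2:ℝ)^(n-n')), r_shift hn]
  set J := i' * 2^(n-n') with hJ
  rw [h1]
  rw [h1] at hne
  have hJi : (J:ℝ) ≠ (i:ℝ) := by
    intro hc
    exact hne (by rw [hc])
  have hJi' : J ≠ i := fun hc => hJi (by exact_mod_cast hc)
  have hrp := r_pos n
  rcases Nat.lt_or_ge J i with h | h
  · have : (J:ℝ) + 1 ≤ (i:ℝ) := by exact_mod_cast h
    rw [abs_of_nonpos (by nlinarith)]
    nlinarith
  · have h2 : i < J := by omega
    have : (i:ℝ) + 1 ≤ (J:ℝ) := by exact_mod_cast h2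
    rw [abs_of_nonneg (by nlinarith)]
    nlinarith

lemma r2n_eq (n : ℕ) : r (2*n) = (1/4:ℝ)^n := by
  rw [r, pow_mul]; norm_num

lemma tail_tsum (n : ℕ) : ∑' k, (if n < k then r (2*k) else 0) = (1/3) * r (2*n) := by
  have hsum : Summable (fun k => if n < k then r (2*k) else 0) := by
    apply Summable.of_nonneg_of_le (fun k => ?_) (fun k => ?_)
      (summable_geometric_of_lt_one (by norm_num : (0:ℝ) ≤ 1/4) (by norm_num : (1/4:ℝ) < 1))
    · split
      · exact r_nonneg _
      · exact le_refl _
    · split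
      · exact le_of_eq (r2n_eq k)
      · positivity
  have h0 : ∀ i ∈ Finset.range (n+1), (if n < i then r (2*i) else 0) = 0 := by
    intro i hi
    rw [Finset.mem_range] at hi
    rw [if_neg (by omega)]
  have hshift := Summable.sum_add_tsum_nat_add (n+1) hsum
  rw [Finset.sum_eq_zero h0, zero_add] at hshift
  have hterm : ∀ k : ℕ, (if n < k + (n+1) then r (2*(k + (n+1))) else 0) = (1/4:ℝ)^k * ((1/4)^(n+1)) := by
    intro k
    rw [if_pos (by omega), r2n_eq]
    rw [pow_add]
  rw [← hshift]
  have : ∑' (k : ℕ), (if n < k + (n+1) then r (2*(k + (n+1))) else 0)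
      = ∑' (k : ℕ), (1/4:ℝ)^k * ((1/4)^(n+1)) := by
    exact tsum_congr hterm
  rw [this, tsum_mul_right, tsum_geometric_of_lt_one (by norm_num) (by norm_num)]
  rw [r2n_eq]
  ring

lemma F0_diff_ge {u v : ℝ} {n : ℕ} (hu : u ∈ U n) (hv : v ∉ U n)
    (hmono : ∀ n' < n, v ∈ U n' → u ∈ U n') :
    (2/3) * r (2*n) ≤ F0 u - F0 v := by
  have hsu := F0_summable u
  have hsv := F0_summable v
  have hsub : Summable (fun k => (if u ∈ U k then r (2*k) else 0) - (if v ∈ U k then r (2*k) else 0)) :=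
    hsu.sub hsv
  have hw : Summable (fun k => (if k = n then r (2*n) else 0) - (if n < k then r (2*k) else 0)) := by
    apply Summable.sub
    · exact summable_of_finite_support (Set.Finite.subset (Set.finite_singleton n)
        (fun k hk => by by_contra hc; simp at hc; simp [hc] at hk))
    · apply Summable.of_nonneg_of_le (fun k => ?_) (fun k => ?_)
        (summable_geometric_of_lt_one (by norm_num : (0:ℝ) ≤ 1/4) (by norm_num : (1/4:ℝ) < 1))
      · split
        · exact r_nonneg _
        · exact le_refl _
      · split
        · exact le_of_eq (r2n_eq k)
        · positivity
  have hle : ∀ k, ((if k = n then r (2*n) else 0) - (if n < k then r (2*k) else 0))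
      ≤ ((if u ∈ U k then r (2*k) else 0) - (if v ∈ U k then r (2*k) else 0)) := by
    intro k
    rcases lt_trichotomy k n with hk | hk | hk
    · rw [if_neg (by omega), if_neg (by omega)]
      have h1 : (if v ∈ U k then r (2*k) else 0) ≤ (if u ∈ U k then r (2*k) else 0) := by
        by_cases hvk : v ∈ U k
        · rw [if_pos hvk, if_pos (hmono k hk hvk)]
        · rw [if_neg hvk]
          split
          · exact r_nonneg _
          · exact le_refl _
      linarith
    · subst hk
      rw [if_pos rfl, if_neg (by omega), if_pos hu, if_neg hv]
    · rw [if_neg (by omega), if_pos hk]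
      have h1 : 0 ≤ (if u ∈ U k then r (2*k) else 0) := by
        split
        · exact r_nonneg _
        · exact le_refl _
      have h2 : (if v ∈ U k then r (2*k) else 0) ≤ r (2*k) := by
        split
        · exact le_refl _
        · exact r_nonneg _
      linarith
  have hts := Summable.tsum_le_tsum hle hw hsub
  rw [Summable.tsum_sub hsu hsv] at hts
  rw [Summable.tsum_sub (by
    exact summable_of_finite_support (Set.Finite.subset (Set.finite_singleton n)
      (fun k hk => by by_contra hc; simp at hc; simp [hc] at hk))) (by
    apply Summable.of_nonneg_of_le (fun k => ?_) (fun k => ?_)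
      (summable_geometric_of_lt_one (by norm_num : (0:ℝ) ≤ 1/4) (by norm_num : (1/4:ℝ) < 1))
    · split
      · exact r_nonneg _
      · exact le_refl _
    · split
      · exact le_of_eq (r2n_eq k)
      · positivity)] at hts
  rw [tsum_ite_eq n (fun _ => r (2*n)), tail_tsum n] at hts
  show (2/3) * r (2*n) ≤ F0 u - F0 v
  rw [F0, F0]
  linarith

/-! ### membership facts for the points u and v -/

lemma r_n2_lt (n : ℕ) : r (n+2) < r n := by
  have h1 : r (n+2) = r (n+1) / 2 := r_succ (n+1)
  have h2 : r (n+1) = r n / 2 := r_succ n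
  have := r_pos n
  linarith

lemma u_mem_Un {n i : ℕ} (hi : i < 2^n) (m' : ℕ) :
    ((i:ℝ)*r n + 5/2 * r (n+m'+4)) ∈ U n := by
  refine mem_U.2 ⟨i, m', hi, ?_, ?_⟩
  · have := r_pos (n+m'+4); linarith
  · have := r_pos (n+m'+4); linarith

lemma v_lt_window (n i m' : ℕ) :
    (i:ℝ)*r n + 7/2 * r (n+m'+4) < (i:ℝ)*r n + r (n+2) := by
  have h1 : r (n+m'+4) ≤ r (n+4) := r_antitone (by omega)
  have h2 := four_r n
  have h3 := r_pos (n+4)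
  have h4 := r_pos (n+m'+4)
  nlinarith

lemma v_not_Un {n i : ℕ} (hi : i < 2^n) (m' : ℕ) :
    ((i:ℝ)*r n + 7/2 * r (n+m'+4)) ∉ U n := by
  intro hm
  obtain ⟨i₂, m₂, hi₂, hb⟩ := mem_U.1 hm
  obtain ⟨hb1, hb2⟩ := hb
  by_cases hii : i₂ = i
  · subst hii
    exact ratio35 (n+m'+4) (n+m₂+4) ⟨by linarith, by linarith⟩
  · have hgap := grid_gap (le_refl n) (show (i₂:ℝ) * r n ≠ (i:ℝ) * r n from by
      intro hc
      exact hii (by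
        have := r_pos n
        have h5 : (i₂:ℝ) = (i:ℝ) := by
          exact mul_right_cancel₀ (ne_of_gt this) hc
        exact_mod_cast h5))
    have hw := bump_subset_window n i₂ m₂ ⟨hb1, hb2⟩
    have hvgt : (i:ℝ)*r n < (i:ℝ)*r n + 7/2 * r (n+m'+4) := by
      have := r_pos (n+m'+4); linarith
    have hvlt := v_lt_window n i m'
    have h22 := r_n2_lt n
    rcases abs_cases ((i₂:ℝ) * r n - (i:ℝ) * r n) with ⟨he, _⟩ | ⟨he, _⟩
    · -- i₂ r n ≥ i r n + r n
      rw [he] at hgap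
      have := hw.1
      linarith
    · -- i₂ r n ≤ i r n - r n
      rw [he] at hgap
      have := hw.2
      linarith

lemma v_mem_mono {n i m' n' : ℕ} (hi : i < 2^n) (hn' : n' < n) {ρ : ℝ}
    (hρ2 : ρ ≤ r (n+2)) (hc4 : 7/2 * r (n+m'+4) < ρ)
    (havoid : ∀ n'' i'' m₂ : ℕ, n'' < n → i'' < 2^n → m₂ < n →
      (i'':ℝ) * r n'' + 2 * r (n''+m₂+4) ∉ Ioo ((i:ℝ)*r n) ((i:ℝ)*r n + ρ))
    (hv : ((i:ℝ)*r n + 7/2 * r (n+m'+4)) ∈ U n') :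
    ((i:ℝ)*r n + 5/2 * r (n+m'+4)) ∈ U n' := by
  set a := (i:ℝ)*r n with ha
  set c' := r (n+m'+4) with hc'
  obtain ⟨i', m₂, hi', hb⟩ := mem_U.1 hv
  set a' := (i':ℝ) * r n' with ha'
  set c₂ := r (n'+m₂+4) with hc₂
  obtain ⟨hb1, hb2⟩ := hb
  rw [← ha', ← hc₂] at hb1 hb2
  have hcp := r_pos (n+m'+4)
  have hc₂p := r_pos (n'+m₂+4)
  by_cases haa : a' = a
  · exfalso
    rw [haa] at hb1 hb2
    exact ratio35 (n+m'+4) (n'+m₂+4) ⟨by linarith, by linarith⟩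
  · have hα : a' + 2*c₂ ≤ a := by
      by_contra hαgt
      push_neg at hαgt
      have hαlt : a' + 2*c₂ < a + ρ := lt_of_le_of_lt hb1 (by linarith)
      have haa' : a' < a := by
        by_contra hge
        push_neg at hge
        have hgap := grid_gap hn'.le (show (i':ℝ) * r n' ≠ (i:ℝ) * r n from haa)
        rw [abs_of_nonneg (by rw [← ha', ← ha]; linarith)] at hgap
        have h22 := r_n2_lt n
        linarith
      have hgap := grid_gap hn'.le (show (i':ℝ) * r n' ≠ (i:ℝ) * r n from haa)
      rw [abs_of_nonpos (by rw [← ha', ← ha]; linarith)] at hgap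
      -- 2 c₂ > r n
      have h2c : r n < 2 * c₂ := by linarith
      have hm₂ : m₂ < n := by
        by_contra hm
        push_neg at hm
        have : r (n'+m₂+4) ≤ r (n+1) := r_antitone (by omega)
        have h3 : r (n+1) = r n / 2 := r_succ n
        linarith
      exact havoid n' i' m₂ hn' (lt_of_lt_of_le hi'
        (Nat.pow_le_pow_right (by norm_num) hn'.le)) hm₂ ⟨by linarith, hαlt⟩
    refine mem_U.2 ⟨i', m₂, hi', ?_, ?_⟩
    · rw [← ha', ← hc₂]
      linarith
    · rw [← ha', ← hc₂]
      linarith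

/-! ### step functions are locally constant off their endpoints -/

def proj (S : Set (Fin 1 → ℝ)) : Set ℝ := (fun p : Fin 1 → ℝ => p 0) '' S

lemma mem_iff_proj {S : Set (Fin 1 → ℝ)} {u : ℝ} :
    (fun _ : Fin 1 => u) ∈ S ↔ u ∈ proj S := by
  constructor
  · intro h
    exact ⟨fun _ => u, h, rfl⟩
  · rintro ⟨p, hp, he⟩
    have : p = fun _ : Fin 1 => u := by
      funext k
      have hk : k = (0 : Fin 1) := Subsingleton.elim _ _
      rw [hk]
      exact he
    rwa [← this]

lemma brick_proj_facts {S : Set (Fin 1 → ℝ)} (hS : IsBrick S) :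
    (proj S).OrdConnected ∧ Bornology.IsBounded (proj S) := by
  obtain ⟨I, hI, rfl⟩ := hS
  rcases (univ.pi I).eq_empty_or_nonempty with he | hne
  · rw [proj, he]
    simp only [image_empty]
    exact ⟨Set.ordConnected_empty, Bornology.isBounded_empty⟩
  · rw [proj, Set.eval_image_univ_pi hne]
    exact hI 0

lemma brickVol1_eq (S : Set (Fin 1 → ℝ)) : brickVol S = sSup (proj S) - sInf (proj S) := by
  rw [brickVol, Fin.prod_univ_one]
  rfl

def TI : Set (Fin 1 → ℝ) := Set.Icc (0 : Fin 1 → ℝ) 1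

lemma step_const {g : StepRepr TI} {a ρ u v : ℝ}
    (havoid : ∀ j : Fin g.M,
      sInf (proj (g.B j)) ∉ Ioo a (a+ρ) ∧ sSup (proj (g.B j)) ∉ Ioo a (a+ρ))
    (hu : u ∈ Ioo a (a+ρ)) (hv : v ∈ Ioo a (a+ρ)) (huv : u ≤ v) :
    g.fn (fun _ => u) = g.fn (fun _ => v) := by
  rw [StepRepr.fn]
  apply Finset.sum_congr rfl
  intro j _
  have hJ := brick_proj_facts (g.isBrick j)
  have hiff : u ∈ proj (g.B j) ↔ v ∈ proj (g.B j) := by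
    constructor
    · intro huJ
      by_contra hvJ
      have hsup_le : sSup (proj (g.B j)) ≤ v := by
        by_contra hc
        push_neg at hc
        obtain ⟨w, hw, hvw⟩ := exists_lt_of_lt_csSup ⟨u, huJ⟩ hc
        exact hvJ (hJ.1.out huJ hw ⟨huv, hvw.le⟩)
      exact (havoid j).2 ⟨lt_of_lt_of_le hu.1 (le_csSup hJ.2.bddAbove huJ),
        lt_of_le_of_lt hsup_le hv.2⟩
    · intro hvJ
      by_contra huJ
      have hinf_ge : u ≤ sInf (proj (g.B j)) := by
        by_contra hc
        push_neg at hc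
        obtain ⟨w, hw, hwu⟩ := exists_lt_of_csInf_lt ⟨v, hvJ⟩ hc
        exact huJ (hJ.1.out hw hvJ ⟨hwu.le, huv⟩)
      exact (havoid j).1 ⟨lt_of_lt_of_le hu.1 hinf_ge,
        lt_of_le_of_lt (csInf_le hJ.2.bddBelow hvJ) hv.2⟩
  by_cases hm : u ∈ proj (g.B j)
  · rw [Set.indicator_of_mem (mem_iff_proj.2 hm),
      Set.indicator_of_mem (mem_iff_proj.2 (hiff.1 hm))]
  · rw [Set.indicator_of_notMem (fun hc => hm (mem_iff_proj.1 hc)),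
      Set.indicator_of_notMem (fun hc => hm (hiff.2 (mem_iff_proj.1 hc)))]

lemma exists_free_interval {M₁ : ℕ} (Bf : Fin M₁ → Set (Fin 1 → ℝ))
    (hBf : ∀ j, IsBrick (Bf j)) (hvol : (∑ j, brickVol (Bf j)) < 1/2) :
    ∃ x₀ rad : ℝ, 0 < rad ∧ Ioo (x₀ - rad) (x₀ + rad) ⊆ Ioo 0 1 ∧
      ∀ (j : Fin M₁) (w : ℝ), w ∈ Ioo (x₀ - rad) (x₀ + rad) → w ∉ proj (Bf j) := by
  set Hull : Fin M₁ → Set ℝ := fun j => Icc (sInf (proj (Bf j))) (sSup (proj (Bf j))) with hH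
  have hclosed : IsClosed (⋃ j, Hull j) := isClosed_iUnion_of_finite (fun j => isClosed_Icc)
  set O := Ioo (0:ℝ) 1 \ ⋃ j, Hull j with hO
  have hOopen : IsOpen O := isOpen_Ioo.sdiff hclosed
  have hHvol : volume (⋃ j, Hull j) ≤ ENNReal.ofReal (∑ j, brickVol (Bf j)) := by
    calc volume (⋃ j, Hull j) ≤ ∑ j, volume (Hull j) := measure_iUnion_fintype_le _ _
      _ ≤ ∑ j, ENNReal.ofReal (brickVol (Bf j)) := by
          apply Finset.sum_le_sum
          intro j _
          rw [hH]
          simp only []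
          rw [Real.volume_Icc, brickVol1_eq]
      _ = ENNReal.ofReal (∑ j, brickVol (Bf j)) := by
          rw [ENNReal.ofReal_sum_of_nonneg]
          intro j _
          exact (brick1_volume (hBf j)).2
  have hOne : O.Nonempty := by
    by_contra hc
    rw [Set.not_nonempty_iff_eq_empty, hO, Set.diff_eq_empty] at hc
    have h1 : volume (Ioo (0:ℝ) 1) ≤ ENNReal.ofReal (∑ j, brickVol (Bf j)) :=
      (measure_mono hc).trans hHvol
    rw [Real.volume_Ioo] at h1
    have hnn : 0 ≤ ∑ j, brickVol (Bf j) :=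
      Finset.sum_nonneg (fun j _ => (brick1_volume (hBf j)).2)
    have h2 : (1:ℝ) - 0 ≤ ∑ j, brickVol (Bf j) := (ENNReal.ofReal_le_ofReal_iff hnn).1 h1
    linarith
  obtain ⟨x₀, hx₀⟩ := hOne
  obtain ⟨rad, hrad, hball⟩ := Metric.isOpen_iff.1 hOopen x₀ hx₀
  rw [Real.ball_eq_Ioo] at hball
  refine ⟨x₀, rad, hrad, fun w hw => (hball hw).1, ?_⟩
  intro j w hw hproj
  have hwB : w ∈ Hull j := by
    rw [hH]
    have hb := brick_proj_facts (hBf j)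
    exact ⟨csInf_le hb.2.bddBelow hproj, le_csSup hb.2.bddAbove hproj⟩
  exact (hball hw).2 (Set.mem_iUnion.2 ⟨j, hwB⟩)

lemma exists_dyadic {x₀ rad : ℝ} (h0 : 0 < x₀) (h1 : x₀ < 1) (hrad : 0 < rad) :
    ∃ n i : ℕ, i < 2^n ∧
      ∀ w : ℝ, (i:ℝ)*r n < w → w ≤ (i:ℝ)*r n + r (n+2) → w ∈ Ioo (x₀ - rad) (x₀ + rad) := by
  obtain ⟨n, hn⟩ := exists_r_lt hrad
  set i := ⌊x₀ * 2^n⌋₊ with hi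
  have hp : (0:ℝ) < 2^n := by positivity
  have h2 : (i:ℝ) ≤ x₀ * 2^n := Nat.floor_le (by positivity)
  have h3 : x₀ * 2^n < (i:ℝ) + 1 := Nat.lt_floor_add_one _
  have hpr := pow_mul_r n
  have hrp := r_pos n
  have ha1 : (i:ℝ) * r n ≤ x₀ := by nlinarith
  have ha2 : x₀ < (i:ℝ) * r n + r n := by nlinarith
  refine ⟨n, i, ?_, ?_⟩
  · rw [hi]
    rw [Nat.floor_lt (by positivity)]
    push_cast
    nlinarith
  · intro w hw1 hw2
    have h22 := r_n2_lt n
    constructor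
    · linarith
    · linarith

lemma exists_rho (n i : ℕ) (Fs : Finset ℝ) :
    ∃ ρ : ℝ, 0 < ρ ∧ ρ ≤ r (n+2) ∧
      ∀ e ∈ Fs, e ∉ Ioo ((i:ℝ)*r n) ((i:ℝ)*r n + ρ) := by
  set a := (i:ℝ)*r n with ha
  set cand := insert (r (n+2)) ((Fs.filter (fun e => a < e)).image (fun e => e - a)) with hcand
  have hne : cand.Nonempty := ⟨r (n+2), Finset.mem_insert_self _ _⟩
  refine ⟨cand.min' hne, ?_, ?_, ?_⟩
  · have hmem := cand.min'_mem hne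
    rcases Finset.mem_insert.1 hmem with he | he
    · rw [he]; exact r_pos _
    · obtain ⟨e, hef, hee⟩ := Finset.mem_image.1 he
      rw [← hee]
      have := (Finset.mem_filter.1 hef).2
      linarith
  · exact Finset.min'_le _ _ (Finset.mem_insert_self _ _)
  · intro e he hIoo
    have hgt : a < e := hIoo.1
    have hmem : e - a ∈ cand := Finset.mem_insert_of_mem
      (Finset.mem_image.2 ⟨e, Finset.mem_filter.2 ⟨he, hgt⟩, rfl⟩)
    have := Finset.min'_le _ _ hmem
    have := hIoo.2
    linarith

def F1set (g : StepRepr TI) : Finset ℝ :=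
  (Finset.univ.image fun j => sInf (proj (g.B j))) ∪
    (Finset.univ.image fun j => sSup (proj (g.B j)))

def F2set (n : ℕ) : Finset ℝ :=
  (Finset.range n ×ˢ Finset.range (2^n) ×ˢ Finset.range n).image
    (fun t => (t.2.1:ℝ) * r t.1 + 2 * r (t.1 + t.2.2 + 4))

lemma mem_F2set {n n'' i'' m₂ : ℕ} (h1 : n'' < n) (h2 : i'' < 2^n) (h3 : m₂ < n) :
    ((i'':ℝ) * r n'' + 2 * r (n'' + m₂ + 4)) ∈ F2set n := by
  apply Finset.mem_image.2
  refine ⟨(n'', i'', m₂), ?_, rfl⟩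
  rw [Finset.mem_product, Finset.mem_product]
  exact ⟨Finset.mem_range.2 h1, Finset.mem_range.2 h2, Finset.mem_range.2 h3⟩

lemma F0_not_KIntegrable (F : (Fin 1 → ℝ) → ℝ)
    (hF : ∀ x : ℝ, 0 ≤ x → x ≤ 1 → F (fun _ => x) = F0 x) :
    ¬ KIntegrable TI F := by
  rintro ⟨g, ⟨C, hC⟩, hδ⟩
  obtain ⟨M₁, Bf, hBf, hvol, hunif⟩ := hδ (1/2) (by norm_num)
  obtain ⟨x₀, rad, hrad, hsub01, hfree⟩ := exists_free_interval Bf (fun j => (hBf j).1) hvol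
  have hx₀ : x₀ ∈ Ioo (0:ℝ) 1 := hsub01 ⟨by linarith, by linarith⟩
  obtain ⟨n, i, hi, hwin⟩ := exists_dyadic hx₀.1 hx₀.2 hrad
  set a := (i:ℝ) * r n with ha
  have hεpos : 0 < r (2*n) / 8 := by have := r_pos (2*n); linarith
  rw [Metric.tendstoUniformlyOn_iff] at hunif
  obtain ⟨m₀, hm₀⟩ := eventually_atTop.1 (hunif (r (2*n)/8) hεpos)
  obtain ⟨ρ, hρ0, hρ2, havoid⟩ := exists_rho n i (F1set (g m₀) ∪ F2set n)
  obtain ⟨mm, hmm⟩ := exists_r_lt (show 0 < ρ/4 by linarith)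
  have hc'small : r (n+mm+4) ≤ r mm := r_antitone (by omega)
  set c' := r (n+mm+4) with hc'
  have hcp : 0 < c' := r_pos _
  have hc4 : 7/2 * c' < ρ := by nlinarith
  set u := a + 5/2 * c' with hu
  set v := a + 7/2 * c' with hv
  have hvw : v < a + r (n + 2) := hv ▸ (hc' ▸ (ha ▸ v_lt_window n i mm))
  clear_value u v
  clear_value c'
  clear_value a
  have huI : u ∈ Ioo a (a + ρ) := ⟨by linarith, by linarith⟩
  have hvI : v ∈ Ioo a (a + ρ) := ⟨by linarith, by linarith⟩
  have hwinu : u ∈ Ioo (x₀ - rad) (x₀ + rad) := by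
    apply hwin u huI.1
    linarith
  have hwinv : v ∈ Ioo (x₀ - rad) (x₀ + rad) := by
    apply hwin v hvI.1
    linarith
  have hmemS : ∀ w : ℝ, w ∈ Ioo (x₀-rad) (x₀+rad) →
      (fun _ : Fin 1 => w) ∈ TI \ ⋃ j, Bf j := by
    intro w hw
    have h01 := hsub01 hw
    constructor
    · refine ⟨fun k => ?_, fun k => ?_⟩
      · simpa using h01.1.le
      · simpa using h01.2.le
    · intro hc
      obtain ⟨j, hj⟩ := Set.mem_iUnion.1 hc
      exact hfree j w hw ⟨_, hj, rfl⟩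
  have hSu := hmemS u hwinu
  have hSv := hmemS v hwinv
  have hdu := hm₀ m₀ (le_refl _) _ hSu
  have hdv := hm₀ m₀ (le_refl _) _ hSv
  have h01u := hsub01 hwinu
  have h01v := hsub01 hwinv
  rw [Real.dist_eq] at hdu hdv
  rw [hF u h01u.1.le h01u.2.le] at hdu
  rw [hF v h01v.1.le h01v.2.le] at hdv
  have hconst : (g m₀).fn (fun _ => u) = (g m₀).fn (fun _ => v) := by
    apply step_const (a := a) (ρ := ρ) ?_ huI hvI (by linarith)
    intro j
    constructor
    · rw [ha]
      apply havoid
      apply Finset.mem_union_left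
      apply Finset.mem_union_left
      exact Finset.mem_image.2 ⟨j, Finset.mem_univ j, rfl⟩
    · rw [ha]
      apply havoid
      apply Finset.mem_union_left
      apply Finset.mem_union_right
      exact Finset.mem_image.2 ⟨j, Finset.mem_univ j, rfl⟩
  have havoid2 : ∀ n'' i'' m₂ : ℕ, n'' < n → i'' < 2^n → m₂ < n →
      (i'':ℝ) * r n'' + 2 * r (n''+m₂+4) ∉ Ioo ((i:ℝ)*r n) ((i:ℝ)*r n + ρ) := by
    intro n'' i'' m₂ h1 h2 h3
    exact havoid _ (Finset.mem_union_right _ (mem_F2set h1 h2 h3))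
  have hc4' : 7/2 * r (n+mm+4) < ρ := by rw [← hc']; exact hc4
  have hdiff : (2/3) * r (2*n) ≤ F0 u - F0 v := by
    rw [hu, hv, ha, hc']
    exact F0_diff_ge (u_mem_Un hi mm) (v_not_Un hi mm)
      (fun n' hn' hv' => v_mem_mono hi hn' hρ2 hc4' havoid2 hv')
  have h1 := abs_lt.1 hdu
  have h2 := abs_lt.1 hdv
  rw [hconst] at h1
  have hr2 := r_pos (2*n)
  linarith [h1.1, h1.2, h2.1, h2.2]

end
end KCounter

/-- main -/
theorem iterated_integration_fails :
    ∃ h : (Fin 2 → ℝ) → ℝ,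
      (∃ C : ℝ, ∀ x ∈ Set.Icc (0 : Fin 2 → ℝ) ![1, 4], |h x| ≤ C) ∧
      KIntegrable (Set.Icc (0 : Fin 2 → ℝ) ![1, 4]) h ∧
      (∀ x ∈ Set.Icc (0 : ℝ) 1,
        ∃ I : ℝ, HasKIntegral (Set.Icc (0 : Fin 1 → ℝ) (fun _ => 4))
          (fun y => h ![x, y 0]) I) ∧
      (∀ F : (Fin 1 → ℝ) → ℝ,
        (∀ x ∈ Set.Icc (0 : Fin 1 → ℝ) 1,
          HasKIntegral (Set.Icc (0 : Fin 1 → ℝ) (fun _ => 4))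
            (fun y => h ![x 0, y 0]) (F x)) →
        ¬ KIntegrable (Set.Icc (0 : Fin 1 → ℝ) 1) F) := by
  refine ⟨KCounter.hfun, ⟨1, fun x _ => ?_⟩, KCounter.hfun_KIntegrable, ?_, ?_⟩
  · classical
    rw [KCounter.hfun, Set.indicator_apply]
    split <;> norm_num
  · intro x _
    exact ⟨KCounter.F0 x, KCounter.slice_hasK x⟩
  · intro F hFa
    apply KCounter.F0_not_KIntegrable F
    intro x h0 h1
    have hx : (fun _ : Fin 1 => x) ∈ Set.Icc (0 : Fin 1 → ℝ) 1 :=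
      ⟨fun k => by simpa using h0, fun k => by simpa using h1⟩
    have hK := hFa (fun _ : Fin 1 => x) hx
    exact KCounter.slice_value_unique x hK
end
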